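/- arXiv:1806.05402 — 6 statements merged into one kernel-verified Lean document; each statement's English description precedes it below -/
import Mathlib

section
/- For Lebesgue-almost every τ ∈ ℝ there exists N₀ (depending on τ) such that m_N(τ) > exp(−0.665·N) for all N ≥ N₀. -/
/-!
Fix `N` and put `r = exp (-0.665 N)`. If `m_N(τ) ≤ r` then `τ` lies within `r` of one of the
values of `∑ s_n / n`, so by Borel–Cantelli it suffices that (number of values) · `r` is summable
in `N`. The number of values is much smaller than `2 ^ N`: for `k` coprime to `6` the part of the
sum over the block `{d k : d ∣ 24}` is `(∑_{d ∣ 24} ± 24 / d) / (24 k)`, which takes at most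
`σ(24) + 1 = 61` values instead of `2 ^ 8`, and a block `{d k : d ∣ 12}` gives at most
`σ(12) + 1 = 29` values instead of `2 ^ 6`. With `M = ⌊N / 144⌋`, the `2 M` blocks of the first
kind with `k < 6 M` and the `2 M` blocks of the second kind with `6 M < k < 12 M` are pairwise
disjoint subsets of `[1, N]`, so there are at most `2 ^ N (1769 / 2 ^ 14) ^ (2 M)` values, and
`2 ^ 144 exp (-95.76) (1769 / 2 ^ 14) ^ 2 < 1`.
-/

open MeasureTheory

/-- `m_N(τ)`: the minimum of `|∑_{n=1}^N s_n/n − τ|` over signs `s_n ∈ {−1,+1}`. -/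
noncomputable def mN (N : ℕ) (τ : ℝ) : ℝ :=
  sInf {x : ℝ | ∃ s : Fin N → ℝ, (∀ i, s i = 1 ∨ s i = -1) ∧
    x = |(∑ i : Fin N, s i / ((i : ℕ) + 1)) - τ|}

open Finset Filter ArithmeticFunction
open scoped ArithmeticFunction.sigma

def signedSums (s : Finset ℕ) : Set ℝ :=
  {x | ∃ ε : ℕ → ℝ, (∀ n, ε n = 1 ∨ ε n = -1) ∧ x = ∑ n ∈ s, ε n / n}

theorem signedSums_union_subset {s t : Finset ℕ} (h : Disjoint s t) :
    signedSums (s ∪ t) ⊆ (fun p : ℝ × ℝ => p.1 + p.2) '' signedSums s ×ˢ signedSums t := by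
  rintro x ⟨ε, hε, rfl⟩
  exact ⟨(_, _), ⟨⟨ε, hε, rfl⟩, ⟨ε, hε, rfl⟩⟩, (sum_union h).symm⟩

theorem encard_signedSums_union_le {s t : Finset ℕ} (h : Disjoint s t) :
    (signedSums (s ∪ t)).encard ≤ (signedSums s).encard * (signedSums t).encard :=
  (Set.encard_le_encard (signedSums_union_subset h)).trans
    ((Set.encard_image_le _ _).trans_eq Set.encard_prod)

theorem signedSums_empty : signedSums ∅ = {0} := by
  ext x
  simp only [signedSums, sum_empty, Set.mem_ofPred_eq, Set.mem_singleton_iff]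
  exact ⟨fun ⟨_, _, hx⟩ => hx, fun hx => ⟨fun _ => 1, fun _ => Or.inl rfl, hx⟩⟩

theorem encard_signedSums_biUnion_le_pow {ι : Type*} [DecidableEq ι] {K : Finset ι}
    {B : ι → Finset ℕ} (hB : (K : Set ι).PairwiseDisjoint B) {c : ℕ∞}
    (hc : ∀ k ∈ K, (signedSums (B k)).encard ≤ c) :
    (signedSums (K.biUnion B)).encard ≤ c ^ #K := by
  induction K using Finset.induction_on with
  | empty => simp [signedSums_empty]
  | insert k K hk ih =>
    rw [coe_insert] at hB
    have hdisj : Disjoint (B k) (K.biUnion B) :=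
      (disjoint_biUnion_right _ _ _).mpr fun k' hk' =>
        hB (Set.mem_insert _ _) (Set.mem_insert_of_mem _ hk') (ne_of_mem_of_not_mem hk' hk).symm
    rw [biUnion_insert, card_insert_of_notMem hk, pow_succ']
    exact (encard_signedSums_union_le hdisj).trans <| mul_le_mul' (hc k (mem_insert_self k K))
      (ih (hB.subset (Set.subset_insert _ _)) fun k' hk' => hc k' (mem_insert_of_mem hk'))

theorem encard_signedSums_singleton_le (n : ℕ) : (signedSums {n}).encard ≤ 2 := by
  have h : signedSums {n} ⊆ {1 / (n : ℝ), -1 / (n : ℝ)} := by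
    rintro x ⟨ε, hε, rfl⟩
    rcases hε n with h | h <;> simp [h]
  refine (Set.encard_le_encard h).trans ((Set.encard_insert_le _ _).trans ?_)
  simp only [Set.encard_singleton]; rfl

theorem encard_signedSums_le_two_pow (s : Finset ℕ) : (signedSums s).encard ≤ 2 ^ #s := by
  have h := encard_signedSums_biUnion_le_pow (K := s) (B := ({·}))
    (fun _ _ _ _ h => disjoint_singleton.mpr h) fun n _ => encard_signedSums_singleton_le n
  rwa [biUnion_singleton_eq_self] at h

theorem finite_signedSums (s : Finset ℕ) : (signedSums s).Finite :=
  Set.finite_of_encard_le_coe (k := 2 ^ #s) (by exact_mod_cast encard_signedSums_le_two_pow s)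

theorem sum_sign_mul_eq_sub {ι : Type*} (A : Finset ι) (ε c : ι → ℝ)
    (hε : ∀ a ∈ A, ε a = 1 ∨ ε a = -1) :
    ∑ a ∈ A, ε a * c a = ∑ a ∈ A, c a - 2 * ∑ a ∈ A with ε a = -1, c a := by
  rw [sum_filter, mul_sum, ← sum_sub_distrib]
  refine sum_congr rfl fun a ha => ?_
  rcases hε a ha with h | h
  · norm_num [h]
  · rw [h, if_pos rfl]; ring

def scaledDivisors (m k : ℕ) : Finset ℕ := m.divisors.image (· * k)

theorem card_scaledDivisors (m : ℕ) {k : ℕ} (hk : k ≠ 0) :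
    #(scaledDivisors m k) = #m.divisors :=
  card_image_of_injective _ fun _ _ h => Nat.eq_of_mul_eq_mul_right (Nat.pos_of_ne_zero hk) h

theorem signedSums_scaledDivisors_subset (m : ℕ) {k : ℕ} (hk : k ≠ 0) :
    signedSums (scaledDivisors m k) ⊆
      ↑((range (σ 1 m + 1)).image fun j : ℕ => ((σ 1 m : ℝ) - 2 * j) / (m * k)) := by
  rintro x ⟨ε, hε, rfl⟩
  have hinj : Set.InjOn (· * k) m.divisors := fun _ _ _ _ h =>
    Nat.eq_of_mul_eq_mul_right (Nat.pos_of_ne_zero hk) h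
  have hterm : ∀ d ∈ m.divisors, ε (d * k) / ((d * k : ℕ) : ℝ) =
      ε (d * k) * ((m / d : ℕ) : ℝ) / (m * k) := by
    intro d hd
    obtain ⟨hdm, hm⟩ := Nat.mem_divisors.mp hd
    have hd0 : (d : ℝ) ≠ 0 := by exact_mod_cast (Nat.pos_of_mem_divisors hd).ne'
    rw [Nat.cast_div hdm hd0]
    push_cast
    field_simp
  have hσ : ∑ d ∈ m.divisors, m / d = σ 1 m := by
    rw [sigma_one_apply]; exact Nat.sum_div_divisors m id
  set j := ∑ d ∈ m.divisors with ε (d * k) = -1, m / d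
  have hj : j ≤ σ 1 m := hσ ▸ sum_le_sum_of_subset (filter_subset _ _)
  refine mem_image.mpr ⟨j, mem_range.mpr (Nat.lt_succ_of_le hj), ?_⟩
  rw [scaledDivisors, sum_image hinj, sum_congr rfl hterm, ← sum_div,
    sum_sign_mul_eq_sub _ _ _ fun d _ => hε _, ← hσ]
  push_cast [j]
  rfl

theorem encard_signedSums_scaledDivisors_le (m : ℕ) {k : ℕ} (hk : k ≠ 0) :
    (signedSums (scaledDivisors m k)).encard ≤ σ 1 m + 1 := by
  refine (Set.encard_le_encard (signedSums_scaledDivisors_subset m hk)).trans ?_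
  rw [Set.encard_coe_eq_coe_finsetCard]
  exact_mod_cast card_image_le.trans (card_range _).le

theorem eq_and_eq_of_mul_eq_mul_of_coprime {d a a' k k' : ℕ} (ha : a ∣ d) (ha' : a' ∣ d)
    (hk : k.Coprime d) (hk' : k'.Coprime d) (h : a * k = a' * k') : a = a' ∧ k = k' := by
  have hkk' : k = k' := Nat.dvd_antisymm
    ((hk.coprime_dvd_right ha').dvd_of_dvd_mul_left (h ▸ dvd_mul_left k a))
    ((hk'.coprime_dvd_right ha).dvd_of_dvd_mul_left (h ▸ dvd_mul_left k' a'))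
  subst hkk'
  rcases Nat.eq_zero_or_pos k with rfl | hk0
  · rw [Nat.coprime_zero_left] at hk
    subst hk
    exact ⟨(Nat.dvd_one.mp ha).trans (Nat.dvd_one.mp ha').symm, rfl⟩
  · exact ⟨Nat.eq_of_mul_eq_mul_right hk0 h, rfl⟩

theorem disjoint_scaledDivisors {d m m' k k' : ℕ} (hm : m ∣ d) (hm' : m' ∣ d)
    (hk : k.Coprime d) (hk' : k'.Coprime d) (hne : k ≠ k') :
    Disjoint (scaledDivisors m k) (scaledDivisors m' k') := by
  simp only [disjoint_left, scaledDivisors, mem_image]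
  rintro _ ⟨a, ha, rfl⟩ ⟨a', ha', h⟩
  exact hne (eq_and_eq_of_mul_eq_mul_of_coprime ((Nat.dvd_of_mem_divisors ha').trans hm')
    ((Nat.dvd_of_mem_divisors ha).trans hm) hk' hk h).2.symm

def coprimeToSix (I : Finset ℕ) : Finset ℕ := (I ×ˢ {1, 5}).image fun p => 6 * p.1 + p.2

theorem card_coprimeToSix (I : Finset ℕ) : #(coprimeToSix I) = 2 * #I := by
  rw [coprimeToSix, card_image_of_injOn, card_product, mul_comm]
  · rfl
  · rintro ⟨j, r⟩ hjr ⟨j', r'⟩ hjr' h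
    simp only [coe_product, Set.mem_prod, mem_coe, mem_insert, mem_singleton] at hjr hjr' h
    simp only [Prod.mk.injEq]
    omega

theorem exists_of_mem_coprimeToSix {I : Finset ℕ} {k : ℕ} (hk : k ∈ coprimeToSix I) :
    ∃ j ∈ I, k = 6 * j + 1 ∨ k = 6 * j + 5 := by
  simp only [coprimeToSix, mem_image, mem_product, mem_insert, mem_singleton] at hk
  obtain ⟨⟨j, r⟩, ⟨hj, hr⟩, rfl⟩ := hk
  exact ⟨j, hj, by omega⟩

theorem pos_and_coprime_of_mem_coprimeToSix {I : Finset ℕ} {k m : ℕ} (hk : k ∈ coprimeToSix I)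
    (hm : m ∣ 24) : 0 < k ∧ k.Coprime m := by
  obtain ⟨j, -, rfl | rfl⟩ := exists_of_mem_coprimeToSix hk <;>
  · refine ⟨by omega, (Nat.Coprime.pow_right 3 ?_).coprime_dvd_right
      (hm.trans (by norm_num : 24 ∣ 6 ^ 3))⟩
    rw [Nat.coprime_mul_left_add_left]
    norm_num

theorem mem_coprimeToSix_Ico {a b k : ℕ} (hk : k ∈ coprimeToSix (Ico a b)) :
    6 * a < k ∧ k < 6 * b := by
  obtain ⟨j, hj, hk⟩ := exists_of_mem_coprimeToSix hk
  rw [mem_Ico] at hj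
  omega

theorem pairwiseDisjoint_scaledDivisors {m : ℕ} {K : Finset ℕ} (hK : ∀ k ∈ K, k.Coprime m) :
    (K : Set ℕ).PairwiseDisjoint (scaledDivisors m) := fun k hk k' hk' hne =>
  disjoint_scaledDivisors dvd_rfl dvd_rfl (hK k hk) (hK k' hk') hne

theorem card_biUnion_scaledDivisors {m : ℕ} {K : Finset ℕ} (hK : ∀ k ∈ K, 0 < k ∧ k.Coprime m) :
    #(K.biUnion (scaledDivisors m)) = #m.divisors * #K := by
  rw [card_biUnion (pairwiseDisjoint_scaledDivisors fun k hk => (hK k hk).2),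
    sum_congr rfl fun k hk => card_scaledDivisors m (hK k hk).1.ne', sum_const, smul_eq_mul,
    mul_comm]

theorem encard_signedSums_biUnion_scaledDivisors_le {m : ℕ} {K : Finset ℕ}
    (hK : ∀ k ∈ K, 0 < k ∧ k.Coprime m) :
    (signedSums (K.biUnion (scaledDivisors m))).encard ≤ (σ 1 m + 1) ^ #K :=
  encard_signedSums_biUnion_le_pow (pairwiseDisjoint_scaledDivisors fun k hk => (hK k hk).2)
    fun k hk => encard_signedSums_scaledDivisors_le m (hK k hk).1.ne'

theorem biUnion_scaledDivisors_subset_Icc {m N : ℕ} {K : Finset ℕ}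
    (hK : ∀ k ∈ K, 0 < k ∧ m * k ≤ N) : K.biUnion (scaledDivisors m) ⊆ Icc 1 N := by
  simp only [biUnion_subset, scaledDivisors, image_subset_iff, mem_Icc]
  intro k hk d hd
  exact ⟨Nat.mul_pos (Nat.pos_of_mem_divisors hd) (hK k hk).1,
    (Nat.mul_le_mul_right k (Nat.divisor_le hd)).trans (hK k hk).2⟩

def blocks (M : ℕ) : Finset ℕ :=
  (coprimeToSix (Ico 0 M)).biUnion (scaledDivisors 24) ∪
    (coprimeToSix (Ico M (2 * M))).biUnion (scaledDivisors 12)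

theorem disjoint_blocks (M : ℕ) :
    Disjoint ((coprimeToSix (Ico 0 M)).biUnion (scaledDivisors 24))
      ((coprimeToSix (Ico M (2 * M))).biUnion (scaledDivisors 12)) := by
  refine (disjoint_biUnion_left _ _ _).mpr fun k hk => (disjoint_biUnion_right _ _ _).mpr
    fun k' hk' => disjoint_scaledDivisors dvd_rfl (by norm_num)
      (pos_and_coprime_of_mem_coprimeToSix hk dvd_rfl).2
      (pos_and_coprime_of_mem_coprimeToSix hk' dvd_rfl).2 ?_
  have := (mem_coprimeToSix_Ico hk).2
  have := (mem_coprimeToSix_Ico hk').1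
  omega

theorem card_blocks (M : ℕ) : #(blocks M) = 28 * M := by
  rw [blocks, card_union_of_disjoint (disjoint_blocks M),
    card_biUnion_scaledDivisors fun k hk => pos_and_coprime_of_mem_coprimeToSix hk dvd_rfl,
    card_biUnion_scaledDivisors fun k hk => pos_and_coprime_of_mem_coprimeToSix hk (by norm_num),
    card_coprimeToSix, card_coprimeToSix, Nat.card_Ico, Nat.card_Ico,
    show #(Nat.divisors 24) = 8 by decide, show #(Nat.divisors 12) = 6 by decide]
  omega

theorem blocks_subset_Icc {M N : ℕ} (h : 144 * M ≤ N) : blocks M ⊆ Icc 1 N := by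
  refine union_subset (biUnion_scaledDivisors_subset_Icc fun k hk => ?_)
    (biUnion_scaledDivisors_subset_Icc fun k hk => ?_) <;>
  · have := mem_coprimeToSix_Ico hk
    exact ⟨by omega, by omega⟩

theorem encard_signedSums_blocks_le (M : ℕ) :
    (signedSums (blocks M)).encard ≤ 1769 ^ (2 * M) := by
  have h24 := encard_signedSums_biUnion_scaledDivisors_le (m := 24)
    (K := coprimeToSix (Ico 0 M)) fun k hk => pos_and_coprime_of_mem_coprimeToSix hk dvd_rfl
  have h12 := encard_signedSums_biUnion_scaledDivisors_le (m := 12)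
    (K := coprimeToSix (Ico M (2 * M))) fun k hk =>
      pos_and_coprime_of_mem_coprimeToSix hk (by norm_num)
  rw [card_coprimeToSix, Nat.card_Ico, Nat.sub_zero] at h24
  rw [card_coprimeToSix, Nat.card_Ico, show 2 * M - M = M by omega] at h12
  calc (signedSums (blocks M)).encard
      ≤ _ * _ := encard_signedSums_union_le (disjoint_blocks M)
    _ ≤ (σ 1 24 + 1) ^ (2 * M) * (σ 1 12 + 1) ^ (2 * M) := mul_le_mul' h24 h12
    _ = 1769 ^ (2 * M) := by
      rw [← mul_pow, show σ 1 24 = 60 by rw [sigma_one_apply]; decide,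
        show σ 1 12 = 28 by rw [sigma_one_apply]; decide]
      norm_num

theorem encard_signedSums_Icc_le (N : ℕ) :
    (signedSums (Icc 1 N)).encard ≤ (1769 ^ (2 * (N / 144)) * 2 ^ (N - 28 * (N / 144)) : ℕ) := by
  have hsub := blocks_subset_Icc (Nat.mul_div_le N 144)
  rw [← union_sdiff_of_subset hsub]
  calc _ ≤ _ * _ := encard_signedSums_union_le disjoint_sdiff
    _ ≤ 1769 ^ (2 * (N / 144)) * 2 ^ #(Icc 1 N \ blocks (N / 144)) :=
      mul_le_mul' (encard_signedSums_blocks_le _) (encard_signedSums_le_two_pow _)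
    _ = _ := by rw [card_sdiff_of_subset hsub, Nat.card_Icc, card_blocks]; push_cast; rfl

theorem ncard_signedSums_Icc_le (N : ℕ) :
    ((signedSums (Icc 1 N)).ncard : ℝ) ≤ 2 ^ N * (1769 ^ 2 / 2 ^ 28) ^ (N / 144) := by
  have h := (Set.encard_le_coe_iff_finite_ncard_le.mp (encard_signedSums_Icc_le N)).2
  have hN : N - 28 * (N / 144) + 28 * (N / 144) = N := Nat.sub_add_cancel (by omega)
  calc ((signedSums (Icc 1 N)).ncard : ℝ)
      ≤ (1769 ^ (2 * (N / 144)) * 2 ^ (N - 28 * (N / 144)) : ℕ) := by exact_mod_cast h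
    _ = 2 ^ N * (1769 ^ 2 / 2 ^ 28) ^ (N / 144) := by
      have h2 : (2 : ℝ) ^ N = 2 ^ (N - 28 * (N / 144)) * 2 ^ (28 * (N / 144)) := by
        rw [← pow_add, hN]
      rw [h2, div_pow, ← pow_mul, ← pow_mul]
      push_cast
      field_simp

theorem summable_pow_mul_pow_div {x γ : ℝ} {k : ℕ} (hx : 0 ≤ x) (hγ0 : 0 < γ) (hγ1 : γ ≤ 1)
    (hk : k ≠ 0) (h : x ^ k * γ < 1) : Summable fun n => x ^ n * γ ^ (n / k) := by
  set ρ := γ ^ (k⁻¹ : ℝ)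
  have hρk : ρ ^ k = γ := Real.rpow_inv_natCast_pow hγ0.le hk
  have hρ0 : 0 ≤ ρ := Real.rpow_nonneg hγ0.le _
  have hρ1 : ρ ≤ 1 := Real.rpow_le_one hγ0.le hγ1 (by positivity)
  have hxρ : x * ρ < 1 := by
    by_contra! hle
    have := one_le_pow₀ (n := k) hle
    rw [mul_pow, hρk] at this
    linarith
  refine ((summable_geometric_of_lt_one (mul_nonneg hx hρ0) hxρ).div_const γ).of_nonneg_of_le
    (fun n => by positivity) fun n => ?_
  have hpow : γ ^ (n / k) * γ ≤ ρ ^ n := by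
    rw [← hρk, ← pow_mul, ← pow_add]
    have := Nat.lt_mul_div_succ n (Nat.pos_of_ne_zero hk)
    exact pow_le_pow_of_le_one hρ0 hρ1 (by rw [mul_add_one] at this; omega)
  rw [mul_pow, le_div_iff₀ hγ0, mul_assoc]
  exact mul_le_mul_of_nonneg_left hpow (pow_nonneg hx n)

theorem two_pow_mul_sq_lt_exp : (2 : ℝ) ^ 116 * 1769 ^ 2 < Real.exp 95.76 := by
  calc (2 : ℝ) ^ 116 * 1769 ^ 2 < 2.7182818283 ^ 95 * 1.76 := by norm_num
    _ ≤ Real.exp 1 ^ 95 * Real.exp 0.76 := by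
      gcongr
      · exact Real.exp_one_gt_d9.le
      · linarith [Real.add_one_le_exp (0.76 : ℝ)]
    _ = Real.exp 95.76 := by rw [← Real.exp_nat_mul, ← Real.exp_add]; norm_num

theorem two_mul_exp_pow_mul_lt_one :
    (2 * Real.exp (-0.665)) ^ 144 * (1769 ^ 2 / 2 ^ 28) < 1 := by
  calc (2 * Real.exp (-0.665)) ^ 144 * (1769 ^ 2 / 2 ^ 28)
      = 2 ^ 116 * 1769 ^ 2 / Real.exp 95.76 := by
        rw [mul_pow, ← Real.exp_nat_mul, show ((144 : ℕ) : ℝ) * -0.665 = -95.76 by norm_num,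
          Real.exp_neg]
        field_simp
    _ < 1 := (div_lt_one (Real.exp_pos _)).mpr two_pow_mul_sq_lt_exp

theorem summable_ncard_signedSums_Icc_mul_exp :
    Summable fun N : ℕ => (signedSums (Icc 1 N)).ncard * Real.exp (-0.665 * N) := by
  refine (summable_pow_mul_pow_div (by positivity) (by norm_num) (by norm_num) (by norm_num)
    two_mul_exp_pow_mul_lt_one).of_nonneg_of_le (fun N => by positivity) fun N => ?_
  calc ((signedSums (Icc 1 N)).ncard : ℝ) * Real.exp (-0.665 * N)
      ≤ 2 ^ N * (1769 ^ 2 / 2 ^ 28) ^ (N / 144) * Real.exp (-0.665) ^ N := by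
        rw [← Real.exp_nat_mul, mul_comm (N : ℝ)]
        exact mul_le_mul_of_nonneg_right (ncard_signedSums_Icc_le N) (Real.exp_pos _).le
    _ = (2 * Real.exp (-0.665)) ^ N * (1769 ^ 2 / 2 ^ 28) ^ (N / 144) := by ring

theorem ae_eventually_forall_lt_abs_sub {S : ℕ → Set ℝ} {r : ℕ → ℝ} (hS : ∀ N, (S N).Finite)
    (h : Summable fun N => (S N).ncard * r N) :
    ∀ᵐ τ ∂volume, ∀ᶠ N in atTop, ∀ x ∈ S N, r N < |x - τ| := by
  have hvol : ∀ N, volume (⋃ x ∈ S N, Metric.closedBall x (r N)) ≤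
      ENNReal.ofReal (2 * ((S N).ncard * r N)) := fun N =>
    calc volume (⋃ x ∈ S N, Metric.closedBall x (r N))
        ≤ ∑' x : S N, volume (Metric.closedBall (x : ℝ) (r N)) :=
          measure_biUnion_le _ (hS N).countable _
      _ = (S N).encard * ENNReal.ofReal (2 * r N) := by
          simp_rw [Real.volume_closedBall]
          exact ENNReal.tsum_set_const _ _
      _ = ENNReal.ofReal (2 * ((S N).ncard * r N)) := by
          rw [← (hS N).cast_ncard_eq, ENat.toENNReal_coe, ← ENNReal.ofReal_natCast,
            ← ENNReal.ofReal_mul (Nat.cast_nonneg _)]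
          ring_nf
  filter_upwards [ae_eventually_notMem (ne_top_of_le_ne_top (h.mul_left 2).tsum_ofReal_ne_top
    (ENNReal.tsum_le_tsum hvol))] with τ hτ
  filter_upwards [hτ] with N hN x hx
  by_contra! hle
  exact hN (Set.mem_biUnion hx (by rwa [Metric.mem_closedBall, Real.dist_eq, abs_sub_comm]))

theorem sum_fin_mem_signedSums_Icc {N : ℕ} {s : Fin N → ℝ} (hs : ∀ i, s i = 1 ∨ s i = -1) :
    ∑ i : Fin N, s i / ((i : ℕ) + 1) ∈ signedSums (Icc 1 N) := by
  refine ⟨fun n => if h : n - 1 < N then s ⟨n - 1, h⟩ else 1, fun n => ?_, ?_⟩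
  · dsimp only
    split_ifs
    · exact hs _
    · exact Or.inl rfl
  · have hIcc : Icc 1 N = (range N).image (· + 1) := by
      ext n
      simp only [mem_Icc, mem_image, mem_range]
      exact ⟨fun h => ⟨n - 1, by omega, by omega⟩, by omega⟩
    rw [hIcc, sum_image fun _ _ _ _ => Nat.add_right_cancel, ← Fin.sum_univ_eq_sum_range]
    refine sum_congr rfl fun i _ => ?_
    simp [i.isLt]

theorem lt_mN_of_forall_lt_abs_sub {N : ℕ} {τ r : ℝ}
    (h : ∀ x ∈ signedSums (Icc 1 N), r < |x - τ|) : r < mN N τ := by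
  have hsub : {x : ℝ | ∃ s : Fin N → ℝ, (∀ i, s i = 1 ∨ s i = -1) ∧
      x = |(∑ i : Fin N, s i / ((i : ℕ) + 1)) - τ|} ⊆ (|· - τ|) '' signedSums (Icc 1 N) := by
    rintro _ ⟨s, hs, rfl⟩
    exact ⟨_, sum_fin_mem_signedSums_Icc hs, rfl⟩
  refine ((((finite_signedSums _).image _).subset hsub).lt_csInf_iff
    ⟨_, fun _ => 1, fun _ => Or.inl rfl, rfl⟩).mpr fun y hy => ?_
  obtain ⟨x, hx, rfl⟩ := hsub hy
  exact h x hx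

theorem statement6 :
    ∀ᵐ τ ∂(volume : Measure ℝ), ∃ N₀ : ℕ, ∀ N : ℕ, N₀ ≤ N →
      mN N τ > Real.exp (-0.665 * N) := by
  filter_upwards [ae_eventually_forall_lt_abs_sub (fun N => finite_signedSums (Icc 1 N))
    summable_ncard_signedSums_Icc_mul_exp] with τ hτ
  obtain ⟨N₀, hN₀⟩ := eventually_atTop.mp hτ
  exact ⟨N₀, fun N hN => lt_mN_of_forall_lt_abs_sub (hN₀ N hN)⟩
end

section
/- For every positive integer N and every compactly supported continuously differentiable function Φ : ℝ → ℂ, one has 2^{−N} Σ_{s₁,…,s_N ∈ {−1,+1}} Φ(Σ_{n=1}^N s_n/n) = ∫_ℝ Φ̂(x) ρ_N(2x) dx, where Φ̂(x) := ∫_ℝ Φ(y) e^{−2πixy} dy. -/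
/-!
Put `ψ y = 2⁻ᴺ ∑ₛ Φ (y + cₛ)` with `cₛ = ∑ₙ sₙ / n`. Shifting `Φ` by `cₛ` multiplies `𝓕 Φ` by a
character, and the average of these characters over all signs factors as
`∏ₙ cos (2π x / n) = ρ_N (2 x)`. Hence `𝓕 ψ = 𝓕 Φ · ρ_N (2 ·)`, and the identity is Fourier
inversion `ψ 0 = ∫ 𝓕 ψ`.

Inversion needs `𝓕 ψ ∈ L¹`. For continuous compactly supported `g`, `|𝓕 g|²` is the nonnegative
Fourier transform of `g ⋆ g̃`, `g̃ v = conj (g (-v))`, so Gaussian summability at `0` and Fatou's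
lemma put `|𝓕 g|²` in `L¹`. Applied to `ψ` and `ψ'`, with `|𝓕 ψ' x| = 2π |x| |𝓕 ψ x|`, this gives
`|𝓕 ψ| ≤ ((1 + x²)⁻¹ + (1 + x²) |𝓕 ψ|²) / 2 ∈ L¹`.
-/

open Real MeasureTheory

/-- `ρ_N(x) = ∏_{n=1}^N cos(πx/n)`. -/
noncomputable def rhoN (N : ℕ) (x : ℝ) : ℝ :=
  ∏ n ∈ Finset.Icc 1 N, Real.cos (Real.pi * x / n)

open Complex Filter
open scoped FourierTransform Topology Convolution ComplexConjugate RealInnerProductSpace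
open scoped ComplexOrder

theorem le_inv_add_mul_sq_div_two {t a : ℝ} (ht : 0 < t) : a ≤ (t⁻¹ + t * a ^ 2) / 2 := by
  have : 0 ≤ (t * a - 1) ^ 2 / t := by positivity
  have h : (t⁻¹ + t * a ^ 2) / 2 - a = (t * a - 1) ^ 2 / t / 2 := by field_simp; ring
  linarith

namespace Real

section InnerProductSpace

variable {V : Type*} [NormedAddCommGroup V] [InnerProductSpace ℝ V]
  [MeasurableSpace V] [BorelSpace V] [FiniteDimensional ℝ V]

theorem continuous_fourier {E : Type*} [NormedAddCommGroup E] [NormedSpace ℂ E] {f : V → E}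
    (hf : Integrable f) : Continuous (𝓕 f) :=
  VectorFourier.fourierIntegral_continuous Real.continuous_fourierChar continuous_inner hf

theorem tendsto_integral_cexp_sq_mul_fourier {f : V → ℂ} (hf : Integrable f)
    (h0 : ContinuousAt f 0) :
    Tendsto (fun c : ℝ => ∫ w : V, cexp (-c⁻¹ * ‖w‖ ^ 2) * 𝓕 f w) atTop (𝓝 (f 0)) := by
  -- `𝓕` is self-adjoint, and the Fourier transforms of the Gaussians form an approximate identity.
  refine (Real.tendsto_integral_gaussian_smul' hf h0).congr' ?_
  filter_upwards [Ioi_mem_atTop 0] with c (hc : 0 < c)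
  have hb : 0 < ((c : ℂ)⁻¹).re := by simpa using hc
  have hgauss : Integrable (fun w : V => cexp (-(c : ℂ)⁻¹ * ‖w‖ ^ 2)) := by
    simpa using GaussianFourier.integrable_cexp_neg_mul_sq_norm_add hb 0 (0 : V)
  have hflip := VectorFourier.integral_fourierIntegral_smul_eq_flip (L := innerₗ V)
    Real.continuous_fourierChar continuous_inner hgauss hf
  simp only [flip_innerₗ, smul_eq_mul] at hflip
  calc _ = ∫ w, 𝓕 (fun v : V => cexp (-(c : ℂ)⁻¹ * ‖v‖ ^ 2)) w * f w := by
        congr with w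
        have hc0 : (c : ℂ) ≠ 0 := by exact_mod_cast hc.ne'
        rw [fourier_gaussian_innerProductSpace hb, smul_eq_mul]
        congr 2
        · simp
        · simp; field_simp
    _ = ∫ w, cexp (-(c : ℂ)⁻¹ * ‖w‖ ^ 2) * 𝓕 f w := hflip
    _ = _ := by simp

theorem integrable_fourier_of_nonneg {f : V → ℂ} (hf : Integrable f) (h0 : ContinuousAt f 0)
    (hpos : ∀ w, 0 ≤ 𝓕 f w) : Integrable (𝓕 f) := by
  set r : V → ℝ := fun w => (𝓕 f w).re
  have hr : 𝓕 f = fun w => (r w : ℂ) := funext fun w => Complex.eq_re_of_ofReal_le (hpos w)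
  have hr0 : ∀ w, 0 ≤ r w := fun w => (Complex.nonneg_iff.1 (hpos w)).1
  have hr_cont : Continuous r := Complex.continuous_re.comp (continuous_fourier hf)
  set G : ℕ → V → ℝ := fun n w => rexp (-((n : ℝ) + 1)⁻¹ * ‖w‖ ^ 2) * r w
  have hG_nonneg : ∀ n w, 0 ≤ G n w := fun n w => mul_nonneg (exp_pos _).le (hr0 w)
  have hG_int : ∀ n, Integrable (G n) := by
    intro n
    refine Integrable.mul_bdd (c := ∫ v, ‖f v‖) ?_ hr_cont.aestronglyMeasurable
      (ae_of_all _ fun w => ?_)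
    · have hb : 0 < ((((n : ℝ) + 1)⁻¹ : ℝ) : ℂ).re := by
        rw [ofReal_re]; positivity
      refine (GaussianFourier.integrable_cexp_neg_mul_sq_norm_add hb 0 (0 : V)).re.congr
        (ae_of_all _ fun w => ?_)
      simp only [zero_mul, add_zero]
      exact_mod_cast Complex.exp_ofReal_re _
    · exact (abs_re_le_norm _).trans
        (VectorFourier.norm_fourierIntegral_le_integral_norm _ _ _ _ _)
  have hG_lim : ∀ w, Tendsto (fun n => G n w) atTop (𝓝 (r w)) := by
    intro w
    have := ((Real.continuous_exp.tendsto _).comp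
      (tendsto_one_div_add_atTop_nhds_zero_nat.neg.mul_const (‖w‖ ^ 2))).mul_const (r w)
    simpa [G, one_div] using this
  have hint_lim : Tendsto (fun n => ∫ w, G n w) atTop (𝓝 (f 0).re) := by
    have hc := (tendsto_integral_cexp_sq_mul_fourier hf h0).comp
      (tendsto_atTop_add_const_right atTop (1 : ℝ) tendsto_natCast_atTop_atTop)
    refine ((Complex.continuous_re.tendsto _).comp hc).congr fun n => ?_
    have : (fun w => cexp (-(((n : ℝ) + 1)⁻¹ : ℝ) * ‖w‖ ^ 2) * 𝓕 f w) = fun w => (G n w : ℂ) := by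
      funext w; simp [G, hr]
    simp only [Function.comp_apply]
    rw [this, integral_complex_ofReal, ofReal_re]
  have hfatou : ∫⁻ w, ‖r w‖ₑ ≤ liminf (fun n => ∫⁻ w, ‖G n w‖ₑ) atTop :=
    calc ∫⁻ w, ‖r w‖ₑ = ∫⁻ w, liminf (fun n => ‖G n w‖ₑ) atTop :=
          lintegral_congr fun w => (hG_lim w).enorm.liminf_eq.symm
      _ ≤ _ := lintegral_liminf_le' fun n => (hG_int n).aemeasurable.enorm
  have hliminf : liminf (fun n => ∫⁻ w, ‖G n w‖ₑ) atTop = ENNReal.ofReal (f 0).re := by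
    refine Eq.trans ?_ (ENNReal.tendsto_ofReal hint_lim).liminf_eq
    congr with n
    rw [ofReal_integral_eq_lintegral_ofReal (hG_int n) (ae_of_all _ (hG_nonneg n))]
    exact lintegral_congr fun w => enorm_of_nonneg (hG_nonneg n w)
  rw [hr]
  exact Integrable.ofReal ⟨hr_cont.aestronglyMeasurable,
    hfatou.trans_lt (hliminf ▸ ENNReal.ofReal_lt_top)⟩

theorem fourier_conj_comp_neg (g : V → ℂ) (w : V) :
    𝓕 (fun v => conj (g (-v))) w = conj (𝓕 g w) := by
  rw [fourier_eq, fourier_eq, ← integral_conj, ← integral_neg_eq_self]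
  congr with v
  simp [Circle.smul_def, inner_neg_left, ← Circle.coe_inv_eq_conj, AddChar.map_neg_eq_inv]

theorem integrable_norm_sq_fourier {g : V → ℂ} (hg : Continuous g) (hgs : HasCompactSupport g) :
    Integrable fun w => ‖𝓕 g w‖ ^ 2 := by
  set g' : V → ℂ := fun v => conj (g (-v))
  have hg'_cont : Continuous g' := continuous_conj.comp (hg.comp continuous_neg)
  have hg'_supp : HasCompactSupport g' :=
    (hgs.comp_homeomorph (Homeomorph.neg V)).comp_left (map_zero _)
  have hg_int : Integrable g := hg.integrable_of_hasCompactSupport hgs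
  have hg'_int : Integrable g' := hg'_cont.integrable_of_hasCompactSupport hg'_supp
  set h := g ⋆[ContinuousLinearMap.mul ℂ ℂ] g'
  have hh : 𝓕 h = fun w => ((‖𝓕 g w‖ ^ 2 : ℝ) : ℂ) := by
    funext w
    rw [Real.fourier_mul_convolution_eq hg_int hg'_int, fourier_conj_comp_neg, mul_conj,
      normSq_eq_norm_sq]
  have h_cont : Continuous h :=
    hg'_supp.continuous_convolution_right _ hg_int.locallyIntegrable hg'_cont
  have h_int : Integrable h :=
    h_cont.integrable_of_hasCompactSupport (hgs.convolution _ hg'_supp)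
  have := integrable_fourier_of_nonneg h_int h_cont.continuousAt
    (fun w => by simp only [hh]; exact zero_le_real.2 (sq_nonneg _))
  rw [hh] at this
  exact this.re

theorem integral_fourier_eq_self_zero {f : V → ℂ} (hf : Integrable f) (hf' : Integrable (𝓕 f))
    (h0 : ContinuousAt f 0) : ∫ w, 𝓕 f w = f 0 := by
  rw [← hf.fourierInv_fourier_eq hf' h0, fourierInv_eq]
  simp

theorem fourier_comp_add_right (Φ : V → ℂ) (a w : V) :
    𝓕 (fun v => Φ (v + a)) w = 𝐞 ⟪a, w⟫ * 𝓕 Φ w :=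
  congrFun (VectorFourier.fourierIntegral_comp_add_right 𝐞 volume (innerₗ V) Φ a) w

theorem fourier_sum_mul_comp_add_right {ι : Type*} (s : Finset ι) (c : ι → ℂ) (a : ι → V)
    {Φ : V → ℂ} (hΦ : Integrable Φ) (w : V) :
    𝓕 (fun v => ∑ i ∈ s, c i * Φ (v + a i)) w = (∑ i ∈ s, c i * 𝐞 ⟪a i, w⟫) * 𝓕 Φ w := by
  have hint : ∀ i, Integrable fun v => 𝐞 (-⟪v, w⟫) • (c i * Φ (v + a i)) := fun i =>
    (Real.fourierIntegral_convergent_iff w).2 ((hΦ.comp_add_right (a i)).const_mul (c i))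
  have hterm : ∀ i, 𝓕 (fun v => c i * Φ (v + a i)) w = c i * 𝓕 (fun v => Φ (v + a i)) w := by
    intro i
    simp only [fourier_eq, ← integral_const_mul, Circle.smul_def, smul_eq_mul, mul_left_comm]
  calc 𝓕 (fun v => ∑ i ∈ s, c i * Φ (v + a i)) w = ∑ i ∈ s, 𝓕 (fun v => c i * Φ (v + a i)) w := by
        simp only [fourier_eq, Finset.smul_sum]
        exact integral_finsetSum s fun i _ => hint i
    _ = _ := by
        simp only [hterm, fourier_comp_add_right, Finset.sum_mul, mul_assoc]

end InnerProductSpace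

theorem fourier_eq_integral_mul_cexp (f : ℝ → ℂ) (x : ℝ) :
    𝓕 f x = ∫ y : ℝ, f y * cexp (-(2 * π * I * x * y)) := by
  rw [fourier_real_eq_integral_exp_smul]
  congr with y
  rw [smul_eq_mul, mul_comm]
  push_cast
  ring_nf

theorem norm_fourier_deriv {Φ : ℝ → ℂ} (hsupp : HasCompactSupport Φ) (hreg : ContDiff ℝ 1 Φ)
    (x : ℝ) : ‖𝓕 (deriv Φ) x‖ = 2 * π * |x| * ‖𝓕 Φ x‖ := by
  rw [Real.fourier_deriv (hreg.continuous.integrable_of_hasCompactSupport hsupp)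
    (hreg.differentiable one_ne_zero)
    ((hreg.continuous_deriv le_rfl).integrable_of_hasCompactSupport hsupp.deriv)]
  simp [Complex.norm_real, abs_of_pos pi_pos]

theorem integrable_fourier_of_contDiff_one {Φ : ℝ → ℂ} (hsupp : HasCompactSupport Φ)
    (hreg : ContDiff ℝ 1 Φ) : Integrable (𝓕 Φ) := by
  have hdom : Integrable fun x : ℝ =>
      ((1 + x ^ 2)⁻¹ + ‖𝓕 Φ x‖ ^ 2 + ((2 * π) ^ 2)⁻¹ * ‖𝓕 (deriv Φ) x‖ ^ 2) / 2 :=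
    ((integrable_inv_one_add_sq.add (integrable_norm_sq_fourier hreg.continuous hsupp)).add
      ((integrable_norm_sq_fourier (hreg.continuous_deriv le_rfl) hsupp.deriv).const_mul _)
      ).div_const _
  refine hdom.mono' (continuous_fourier
    (hreg.continuous.integrable_of_hasCompactSupport hsupp)).aestronglyMeasurable
    (ae_of_all _ fun x => ?_)
  have hx : ((2 * π) ^ 2)⁻¹ * ‖𝓕 (deriv Φ) x‖ ^ 2 = x ^ 2 * ‖𝓕 Φ x‖ ^ 2 := by
    rw [norm_fourier_deriv hsupp hreg, mul_pow, mul_pow, mul_pow, sq_abs]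
    field_simp
  calc ‖𝓕 Φ x‖ ≤ ((1 + x ^ 2)⁻¹ + (1 + x ^ 2) * ‖𝓕 Φ x‖ ^ 2) / 2 :=
        le_inv_add_mul_sq_div_two (by positivity)
    _ = _ := by rw [hx]; ring

end Real

theorem sum_signs_fourierChar {ι : Type*} [Fintype ι] [DecidableEq ι] (a : ι → ℝ) :
    ∑ s : ι → ({-1, 1} : Finset ℤ), (𝐞 (∑ i, ((s i : ℤ) : ℝ) * a i) : ℂ)
      = ∏ i, (2 * Real.cos (2 * π * a i) : ℝ) := by
  set f : ι → ℤ → ℂ := fun i j => cexp ((2 * π * j * a i : ℝ) * I)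
  have hf : ∀ s : ι → ({-1, 1} : Finset ℤ),
      (𝐞 (∑ i, ((s i : ℤ) : ℝ) * a i) : ℂ) = ∏ i, f i (s i) := by
    intro s
    rw [Real.fourierChar_apply, ← Complex.exp_sum, Finset.mul_sum, ofReal_sum, Finset.sum_mul]
    simp only [mul_assoc]
  have hpair : ∀ i, ∑ j : ({-1, 1} : Finset ℤ), f i j = (2 * Real.cos (2 * π * a i) : ℝ) := by
    intro i
    rw [Finset.sum_coe_sort _ (f i), Finset.sum_pair (by decide), ofReal_mul, ofReal_ofNat,
      ofReal_cos, Complex.two_cos]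
    simp only [f]
    push_cast
    rw [add_comm]
    congr 2 <;> ring
  simp only [hf]
  rw [← Fintype.prod_sum fun i (j : ({-1, 1} : Finset ℤ)) => f i j, ofReal_prod]
  exact Finset.prod_congr rfl fun i _ => hpair i

theorem rhoN_eq_prod_fin (N : ℕ) (x : ℝ) :
    rhoN N x = ∏ i : Fin N, Real.cos (π * x / ((i : ℕ) + 1)) := by
  have h := Finset.prod_Ico_add' (fun n : ℕ => Real.cos (π * x / n)) 0 N 1
  rw [zero_add, Finset.Ico_add_one_right_eq_Icc, ← Finset.range_eq_Ico] at h
  rw [rhoN, ← h, ← Fin.prod_univ_eq_prod_range]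
  push_cast
  rfl

theorem rhoN_two_mul_eq_avg_fourierChar (N : ℕ) (x : ℝ) :
    ((rhoN N (2 * x) : ℝ) : ℂ) = ∑ s : Fin N → ({-1, 1} : Finset ℤ),
      (1 / 2 ^ N : ℂ) * 𝐞 ⟪∑ i : Fin N, ((s i : ℤ) : ℝ) / ((i : ℕ) + 1), x⟫ := by
  have h : ∀ s : Fin N → ({-1, 1} : Finset ℤ), ⟪∑ i : Fin N, ((s i : ℤ) : ℝ) / ((i : ℕ) + 1), x⟫
      = ∑ i : Fin N, ((s i : ℤ) : ℝ) * (x / ((i : ℕ) + 1)) := fun s => by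
    rw [Real.inner_apply, Finset.sum_mul]
    exact Finset.sum_congr rfl fun i _ => by ring
  rw [← Finset.mul_sum]
  simp only [h]
  rw [sum_signs_fourierChar, Finset.prod_mul_distrib, Finset.prod_const,
    Finset.card_univ, Fintype.card_fin, rhoN_eq_prod_fin]
  push_cast
  rw [one_div, inv_mul_cancel_left₀ (pow_ne_zero _ two_ne_zero)]
  congr with i
  congr 1
  ring

theorem statement8_general (N : ℕ) (Φ : ℝ → ℂ)
    (hsupp : HasCompactSupport Φ) (hreg : ContDiff ℝ 1 Φ) :
    (1 / 2 ^ N : ℂ) * ∑ s : Fin N → ({-1, 1} : Finset ℤ),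
        Φ (∑ i : Fin N, ((s i : ℤ) : ℝ) / ((i : ℕ) + 1))
      = ∫ x : ℝ,
          (∫ y : ℝ, Φ y * Complex.exp (-(2 * Real.pi * Complex.I * x * y)))
            * (rhoN N (2 * x) : ℂ) := by
  set c : (Fin N → ({-1, 1} : Finset ℤ)) → ℝ := fun s =>
    ∑ i : Fin N, ((s i : ℤ) : ℝ) / ((i : ℕ) + 1)
  set ψ : ℝ → ℂ := fun y => ∑ s, (1 / 2 ^ N : ℂ) * Φ (y + c s)
  have hψ_reg : ContDiff ℝ 1 ψ :=
    ContDiff.sum fun s _ => contDiff_const.mul (hreg.comp (contDiff_id.add contDiff_const))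
  have hψ_supp : HasCompactSupport ψ := by
    have := HasCompactSupport.finset_sum (s := Finset.univ) fun s _ =>
      (hsupp.comp_homeomorph (Homeomorph.addRight (c s))).mul_left (f := fun _ => (1 / 2 ^ N : ℂ))
    simpa [ψ, Finset.sum_fn] using this
  have hψ_fourier : ∀ x, 𝓕 ψ x = 𝓕 Φ x * rhoN N (2 * x) := fun x => by
    rw [fourier_sum_mul_comp_add_right _ _ _
      (hreg.continuous.integrable_of_hasCompactSupport hsupp), rhoN_two_mul_eq_avg_fourierChar,
      mul_comm]
  calc _ = ψ 0 := by simp [ψ, c, Finset.mul_sum]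
    _ = ∫ x, 𝓕 ψ x := (integral_fourier_eq_self_zero
          (hψ_reg.continuous.integrable_of_hasCompactSupport hψ_supp)
          (integrable_fourier_of_contDiff_one hψ_supp hψ_reg) hψ_reg.continuous.continuousAt).symm
    _ = _ := by simp only [hψ_fourier, fourier_eq_integral_mul_cexp]

theorem statement8 (N : ℕ) (hN : 1 ≤ N) (Φ : ℝ → ℂ)
    (hsupp : HasCompactSupport Φ) (hreg : ContDiff ℝ 1 Φ) :
    (1 / 2 ^ N : ℂ) * ∑ s : Fin N → ({-1, 1} : Finset ℤ),
        Φ (∑ i : Fin N, ((s i : ℤ) : ℝ) / ((i : ℕ) + 1))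
      = ∫ x : ℝ,
          (∫ y : ℝ, Φ y * Complex.exp (-(2 * Real.pi * Complex.I * x * y)))
            * (rhoN N (2 * x) : ℂ) :=
  statement8_general N Φ hsupp hreg
end

section
/- For every positive constant C < 1/log 4 there exist constants B, E > 0 and N₀ such that for all integers N ≥ N₀ and all real x ∈ [1, exp(C (log N)²)], one has |ρ_N(x)| < exp(−B·exp(E·√(log x))). -/
open Real Finset

theorem norm_coe_two_mul {u : ℝ} (h : ‖(u : UnitAddCircle)‖ < 1 / 4) :
    ‖((2 * u : ℝ) : UnitAddCircle)‖ = 2 * ‖(u : UnitAddCircle)‖ := by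
  simp only [UnitAddCircle.norm_eq] at h ⊢
  have hround : round (2 * u) = 2 * round u := by
    rw [round_eq_iff]
    push_cast
    constructor <;> linarith [abs_lt.1 h]
  rw [hround, Int.cast_mul, Int.cast_two, ← mul_sub, abs_mul, abs_two]

theorem norm_coe_div_two_pow_lt {y : ℝ} {J : ℕ}
    (h : ∀ j ≤ J, ‖((y / 2 ^ j : ℝ) : UnitAddCircle)‖ < 1 / 4) :
    ‖((y / 2 ^ J : ℝ) : UnitAddCircle)‖ < 1 / 4 / 2 ^ J := by
  induction J with
  | zero => simpa using h 0 le_rfl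
  | succ J ih =>
    have hdouble := norm_coe_two_mul (h (J + 1) le_rfl)
    rw [show 2 * (y / 2 ^ (J + 1)) = y / 2 ^ J by ring] at hdouble
    calc ‖((y / 2 ^ (J + 1) : ℝ) : UnitAddCircle)‖
        = ‖((y / 2 ^ J : ℝ) : UnitAddCircle)‖ / 2 := by rw [hdouble]; ring
      _ < 1 / 4 / 2 ^ J / 2 := by gcongr; exact ih fun j hj => h j (by omega)
      _ = 1 / 4 / 2 ^ (J + 1) := by ring

theorem le_norm_coe_of_mem_Icc {u : ℝ} {a : ℤ} (h₁ : a + 1 / 4 ≤ u)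
    (h₂ : u ≤ a + 3 / 4) : 1 / 4 ≤ ‖(u : UnitAddCircle)‖ := by
  have hfloor : ⌊u⌋ = a := Int.floor_eq_iff.2 ⟨by linarith, by linarith⟩
  rw [UnitAddCircle.norm_eq, abs_sub_round_eq_min, Int.fract, hfloor]
  exact le_min (by linarith) (by linarith)

theorem abs_cos_pi_mul_le {u : ℝ} (h : 1 / 4 ≤ ‖(u : UnitAddCircle)‖) :
    |cos (π * u)| ≤ √2 / 2 := by
  rw [UnitAddCircle.norm_eq] at h
  have hhalf : |u - round u| ≤ 1 / 2 := abs_sub_round u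
  have hshift : |cos (π * u)| = cos (π * |u - round u|) := by
    rw [show π * u = π * (u - round u) + round u * π by ring, cos_add_int_mul_pi, abs_mul,
      abs_zpow, abs_neg, abs_one, one_zpow, one_mul, ← cos_abs, abs_mul, abs_of_pos pi_pos,
      abs_of_nonneg]
    exact cos_nonneg_of_mem_Icc ⟨by nlinarith [pi_pos], by nlinarith [pi_pos]⟩
  rw [hshift, ← cos_pi_div_four]
  exact cos_le_cos_of_nonneg_of_le_pi (by positivity) (by nlinarith [pi_pos])
    (by nlinarith [pi_pos])

noncomputable def farDenominators (N : ℕ) (x : ℝ) : Finset ℕ :=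
  {n ∈ Icc 1 N | 1 / 4 ≤ ‖((x / n : ℝ) : UnitAddCircle)‖}

theorem sqrt_two_div_two_le_exp : √2 / 2 ≤ exp (-(1 / 3)) := by
  have hsq : (√2 / 2) ^ 2 ≤ exp (-(1 / 3)) ^ 2 := by
    rw [div_pow, sq_sqrt zero_le_two, ← exp_nat_mul]
    calc (2 : ℝ) / 2 ^ 2 = exp (-log 2) := by rw [exp_neg, exp_log two_pos]; norm_num
      _ ≤ exp (((2 : ℕ) : ℝ) * -(1 / 3)) := by
        gcongr
        norm_num
        linarith [log_two_gt_d9]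
  exact (pow_le_pow_iff_left₀ (by positivity) (exp_pos _).le two_ne_zero).1 hsq

theorem abs_rhoN_le_exp (N : ℕ) (x : ℝ) :
    |rhoN N x| ≤ exp (-(#(farDenominators N x) / 3)) := by
  set F := farDenominators N x
  have hsub : F ⊆ Icc 1 N := filter_subset _ _
  have hfar : ∏ n ∈ F, |cos (π * x / n)| ≤ (√2 / 2) ^ #F := by
    rw [← prod_const]
    refine prod_le_prod (fun _ _ => abs_nonneg _) fun n hn => ?_
    rw [mul_div_assoc]
    exact abs_cos_pi_mul_le (mem_filter.1 hn).2
  have hrest : ∏ n ∈ Icc 1 N \ F, |cos (π * x / n)| ≤ 1 :=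
    prod_le_one (fun _ _ => abs_nonneg _) fun _ _ => abs_cos_le_one _
  calc |rhoN N x|
        = (∏ n ∈ Icc 1 N \ F, |cos (π * x / n)|) * ∏ n ∈ F, |cos (π * x / n)| := by
        rw [rhoN, abs_prod, prod_sdiff hsub]
    _ ≤ 1 * (√2 / 2) ^ #F := mul_le_mul hrest hfar (prod_nonneg fun _ _ => abs_nonneg _)
        zero_le_one
    _ ≤ exp (-(1 / 3)) ^ #F := by
        rw [one_mul]
        exact pow_le_pow_left₀ (by positivity) sqrt_two_div_two_le_exp _
    _ = exp (-(#F / 3)) := by rw [← exp_nat_mul]; ring_nf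

theorem abs_rhoN_lt_of_le_card {N : ℕ} {x K : ℝ} (hK : exp (1 / 10 * √(log x)) / 100 < K / 3)
    (hKcard : K ≤ #(farDenominators N x)) :
    |rhoN N x| < exp (-(1 / 100) * exp (1 / 10 * √(log x))) :=
  (abs_rhoN_le_exp N x).trans_lt (exp_lt_exp.2 (by linarith))

theorem exists_div_mem_Icc {x : ℝ} (a : ℕ) (hxa : (a + 1 / 4) * (a + 3 / 4) ≤ x / 2) :
    ∃ n : ℕ, 1 ≤ n ∧ (n : ℝ) ≤ 4 * x ∧ a + 1 / 4 ≤ x / n ∧ x / n ≤ a + 3 / 4 := by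
  have h₁ : (0 : ℝ) < a + 1 / 4 := by positivity
  have h₃ : (0 : ℝ) < a + 3 / 4 := by positivity
  have hx : 0 < x := by nlinarith
  set n := ⌊x / (a + 1 / 4)⌋₊
  have hgap : x / (a + 3 / 4) + 1 ≤ x / (a + 1 / 4) := by
    rw [div_add_one h₃.ne', div_le_div_iff₀ h₃ h₁]
    nlinarith
  have hn_le : (n : ℝ) ≤ x / (a + 1 / 4) := Nat.floor_le (by positivity)
  have hn_gt : x / (a + 3 / 4) < n := by linarith [Nat.lt_floor_add_one (x / (a + 1 / 4))]
  have hn_pos : (0 : ℝ) < n := lt_trans (by positivity) hn_gt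
  refine ⟨n, by exact_mod_cast hn_pos, ?_, ?_, ?_⟩
  · calc (n : ℝ) ≤ x / (a + 1 / 4) := hn_le
      _ ≤ x / (1 / 4) := div_le_div_of_nonneg_left hx.le (by norm_num) (by linarith)
      _ = 4 * x := by ring
  · rw [le_div_iff₀ h₁] at hn_le
    rw [le_div_iff₀ hn_pos]
    linarith
  · rw [div_lt_iff₀ h₃] at hn_gt
    rw [div_le_iff₀ hn_pos]
    linarith

theorem sqrt_div_five_le_card_farDenominators {N : ℕ} {x : ℝ} (hx : 1 ≤ x)
    (hN : 4 * x ≤ N) : √x / 5 ≤ #(farDenominators N x) := by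
  set m := ⌈√x / 5⌉₊
  have hsqrt : 1 ≤ √x := one_le_sqrt.2 hx
  have hm : (m : ℝ) < √x / 5 + 1 := Nat.ceil_lt_add_one (by positivity)
  have hsmall : ∀ a ∈ range m, ((a : ℝ) + 1 / 4) * (a + 3 / 4) ≤ x / 2 := by
    intro a ha
    have ham : (a : ℝ) + 1 ≤ m := by exact_mod_cast mem_range.1 ha
    have hxsq := sq_sqrt (zero_le_one.trans hx)
    nlinarith
  choose! n hn using fun a ha => exists_div_mem_Icc a (hsmall a ha)
  calc √x / 5 ≤ m := Nat.le_ceil _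
    _ = #(range m) := by rw [card_range]
    _ ≤ #(farDenominators N x) := by
      refine Nat.cast_le.2 (card_le_card_of_injOn n (fun a ha => ?_) fun a ha b hb hab => ?_)
      · obtain ⟨h1, h4x, hlow, hup⟩ := hn a ha
        refine mem_filter.2 ⟨mem_Icc.2 ⟨h1, by exact_mod_cast h4x.trans hN⟩, ?_⟩
        exact le_norm_coe_of_mem_Icc (a := a) (by push_cast; linarith) (by push_cast; linarith)
      · obtain ⟨-, -, hla, hua⟩ := hn a ha
        obtain ⟨-, -, hlb, hub⟩ := hn b hb
        rw [hab] at hla hua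
        by_contra hne
        rcases Nat.lt_or_gt_of_ne hne with h | h
        · have : (a : ℝ) + 1 ≤ b := by exact_mod_cast h
          linarith
        · have : (b : ℝ) + 1 ≤ a := by exact_mod_cast h
          linarith

theorem abs_rhoN_lt_of_four_mul_le {N : ℕ} {x : ℝ} (hx : 1 ≤ x) (hN : 4 * x ≤ N) :
    |rhoN N x| < exp (-(1 / 100) * exp (1 / 10 * √(log x))) := by
  refine abs_rhoN_lt_of_le_card ?_ (sqrt_div_five_le_card_farDenominators hx hN)
  set s := √(log x)
  have hsqrtx : √x = exp (s ^ 2 / 2) := by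
    rw [sq_sqrt (log_nonneg hx), exp_half, exp_log (by linarith)]
  calc exp (1 / 10 * s) / 100 ≤ exp (s ^ 2 / 2 + 1) / 100 := by
        gcongr
        nlinarith [sq_nonneg (s - 1 / 10)]
    _ = exp (s ^ 2 / 2) * exp 1 / 100 := by rw [exp_add]
    _ < exp (s ^ 2 / 2) * 3 / 100 := by
        gcongr
        exact exp_one_lt_d9.trans (by norm_num)
    _ < √x / 5 / 3 := by
        rw [hsqrtx]
        linarith [exp_pos (s ^ 2 / 2)]

theorem exists_near_multiple {x : ℝ} (hx : 0 ≤ x) {d J : ℕ} (hd : 0 < d)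
    (h : ∀ j ≤ J, ‖((x / (d * 2 ^ j) : ℝ) : UnitAddCircle)‖ < 1 / 4) :
    ∃ k : ℕ, |x - k * d * 2 ^ J| < d / 4 := by
  have hnear := norm_coe_div_two_pow_lt (y := x / d) fun j hj => by rw [div_div]; exact h j hj
  rw [UnitAddCircle.norm_eq] at hnear
  have hround : 0 ≤ round (x / d / 2 ^ J) := by
    rw [round_eq]
    exact Int.floor_nonneg.2 (by positivity)
  lift round (x / d / 2 ^ J) to ℕ using hround with k hk
  refine ⟨k, ?_⟩
  have hd' : (0 : ℝ) < d * 2 ^ J := by positivity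
  calc |x - k * d * 2 ^ J| = |(x / d / 2 ^ J - k) * (d * 2 ^ J)| := by
        congr 1
        field_simp
    _ = |x / d / 2 ^ J - k| * (d * 2 ^ J) := by rw [abs_mul, abs_of_pos hd']
    _ < 1 / 4 / 2 ^ J * (d * 2 ^ J) := by gcongr; exact_mod_cast hnear
    _ = d / 4 := by field_simp

theorem mul_eq_mul_of_near {x : ℝ} {d d' k k' J : ℕ} (hdd' : d + d' ≤ 4 * 2 ^ J)
    (h : |x - k * d * 2 ^ J| < d / 4) (h' : |x - k' * d' * 2 ^ J| < d' / 4) :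
    k * d = k' * d' := by
  have hdd'R : (d : ℝ) + d' ≤ 4 * 2 ^ J := by exact_mod_cast hdd'
  have hlt : |((k * d : ℕ) : ℝ) - (k' * d' : ℕ)| * 2 ^ J < 1 * 2 ^ J := by
    calc |((k * d : ℕ) : ℝ) - (k' * d' : ℕ)| * 2 ^ J
        = |(((k * d : ℕ) : ℝ) - (k' * d' : ℕ)) * 2 ^ J| := by
          rw [abs_mul, abs_of_pos (by positivity : (0 : ℝ) < 2 ^ J)]
      _ = |(x - k' * d' * 2 ^ J) - (x - k * d * 2 ^ J)| := by
          push_cast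
          ring_nf
      _ ≤ |x - k' * d' * 2 ^ J| + |x - k * d * 2 ^ J| := abs_sub _ _
      _ < 1 * 2 ^ J := by linarith
  have hint : |((k * d : ℕ) : ℤ) - (k' * d' : ℕ)| < 1 := by
    exact_mod_cast lt_of_mul_lt_mul_right hlt (by positivity)
  have := Int.abs_lt_one_iff.1 hint
  omega

theorem eq_of_odd_of_mul_two_pow_eq {d d' j j' : ℕ} (hd : Odd d) (hd' : Odd d')
    (h : d * 2 ^ j = d' * 2 ^ j') : d = d' :=
  Nat.dvd_antisymm
    ((hd.coprime_two_right.pow_right j').dvd_of_dvd_mul_right (Dvd.intro _ h))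
    ((hd'.coprime_two_right.pow_right j).dvd_of_dvd_mul_right (Dvd.intro _ h.symm))

def dyadicOdds (A : ℕ) : Finset ℕ := (range (2 ^ (A - 1))).image fun i => 2 ^ A + 2 * i + 1

theorem card_dyadicOdds (A : ℕ) : #(dyadicOdds A) = 2 ^ (A - 1) := by
  rw [dyadicOdds, card_image_of_injective _ fun i i' h => by omega, card_range]

theorem odd_and_mem_Ioo_of_mem_dyadicOdds {A d : ℕ} (hA : 1 ≤ A) (hd : d ∈ dyadicOdds A) :
    Odd d ∧ 2 ^ A < d ∧ d < 2 * 2 ^ A := by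
  obtain ⟨i, hi, rfl⟩ := mem_image.1 hd
  have hpow : 2 ^ A = 2 * 2 ^ (A - 1) := by rw [← pow_succ']; congr 1; omega
  have := mem_range.1 hi
  exact ⟨⟨2 ^ (A - 1) + i, by omega⟩, by omega, by omega⟩

section DyadicOdds

open scoped Classical

def DyadicallyClose (x : ℝ) (A d : ℕ) : Prop :=
  ∀ j ≤ A, ‖((x / (d * 2 ^ j) : ℝ) : UnitAddCircle)‖ < 1 / 4

theorem card_filter_not_dyadicallyClose_le {N A : ℕ} {x : ℝ} (hA : 1 ≤ A)
    (hN : 2 ^ (2 * A + 1) ≤ N) :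
    #{d ∈ dyadicOdds A | ¬DyadicallyClose x A d} ≤ #(farDenominators N x) := by
  have hfar : ∀ d ∈ {d ∈ dyadicOdds A | ¬DyadicallyClose x A d},
      ∃ j ≤ A, 1 / 4 ≤ ‖((x / (d * 2 ^ j) : ℝ) : UnitAddCircle)‖ := by
    intro d hd
    simpa [DyadicallyClose] using (mem_filter.1 hd).2
  choose! j hjA hj using hfar
  refine card_le_card_of_injOn (fun d => d * 2 ^ j d) (fun d hd => ?_) fun d hd d' hd' h => ?_
  · obtain ⟨-, hlow, hup⟩ := odd_and_mem_Ioo_of_mem_dyadicOdds hA (mem_filter.1 hd).1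
    have hle : d * 2 ^ j d ≤ 2 ^ (2 * A + 1) :=
      calc d * 2 ^ j d ≤ (2 * 2 ^ A) * 2 ^ A := by gcongr; omega; exact hjA d hd
        _ = 2 ^ (2 * A + 1) := by ring
    refine mem_filter.2
      ⟨mem_Icc.2 ⟨Nat.mul_pos (by omega) (by positivity), hle.trans hN⟩, ?_⟩
    push_cast
    exact hj d hd
  · exact eq_of_odd_of_mul_two_pow_eq
      (odd_and_mem_Ioo_of_mem_dyadicOdds hA (mem_filter.1 hd).1).1
      (odd_and_mem_Ioo_of_mem_dyadicOdds hA (mem_filter.1 hd').1).1 h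

theorem exists_dvd_of_dyadicallyClose {A : ℕ} {x : ℝ} (hA : 1 ≤ A) (hxA : 2 ^ A ≤ x) :
    ∃ Q : ℕ, Q ≠ 0 ∧ (Q : ℝ) ≤ 2 * x ∧
      {d ∈ dyadicOdds A | DyadicallyClose x A d} ⊆
        {d ∈ Ioc (2 ^ A) (2 * 2 ^ A) | d ∣ Q} := by
  set S := {d ∈ dyadicOdds A | DyadicallyClose x A d}
  have hS : ∀ d ∈ S, Odd d ∧ 2 ^ A < d ∧ d < 2 * 2 ^ A := fun d hd =>
    odd_and_mem_Ioo_of_mem_dyadicOdds hA (mem_filter.1 hd).1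
  have hx : (0 : ℝ) ≤ x := le_trans (by positivity) hxA
  have hnear : ∀ d ∈ S, ∃ k : ℕ, |x - k * d * 2 ^ A| < d / 4 := fun d hd =>
    exists_near_multiple hx (by have := hS d hd; omega) (mem_filter.1 hd).2
  choose! k hk using hnear
  rcases S.eq_empty_or_nonempty with hempty | ⟨d₀, hd₀⟩
  · refine ⟨1, one_ne_zero, ?_, by simp [hempty]⟩
    linarith [Nat.cast_one (R := ℝ), one_le_pow₀ (one_le_two : (1 : ℝ) ≤ 2) (n := A)]
  have hd₀A : (d₀ : ℝ) < 2 * 2 ^ A := by exact_mod_cast (hS d₀ hd₀).2.2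
  have hk₀ := abs_lt.1 (hk d₀ hd₀)
  have hQpos : (0 : ℝ) < k d₀ * d₀ * 2 ^ A := by linarith
  refine ⟨k d₀ * d₀, ?_, ?_, fun d hd => ?_⟩
  · have : (0 : ℝ) < k d₀ * d₀ := pos_of_mul_pos_left hQpos (by positivity)
    exact_mod_cast this.ne'
  · push_cast
    nlinarith [one_le_pow₀ (one_le_two : (1 : ℝ) ≤ 2) (n := A)]
  · obtain ⟨-, hlow, hup⟩ := hS d hd
    refine mem_filter.2 ⟨mem_Ioc.2 ⟨hlow, hup.le⟩, Dvd.intro_left (k d) ?_⟩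
    exact mul_eq_mul_of_near (by have := (hS d₀ hd₀).2.2; omega) (hk d hd) (hk d₀ hd₀)

theorem exists_two_pow_le_card_add_card {N A : ℕ} {x : ℝ} (hA : 1 ≤ A)
    (hN : 2 ^ (2 * A + 1) ≤ N) (hxA : 2 ^ A ≤ x) :
    ∃ Q : ℕ, Q ≠ 0 ∧ (Q : ℝ) ≤ 2 * x ∧
      2 ^ (A - 1) ≤ #(farDenominators N x) + #{d ∈ Ioc (2 ^ A) (2 * 2 ^ A) | d ∣ Q} := by
  obtain ⟨Q, hQ, hQx, hsub⟩ := exists_dvd_of_dyadicallyClose hA hxA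
  refine ⟨Q, hQ, hQx, ?_⟩
  rw [← card_dyadicOdds, ← card_filter_add_card_filter_not (DyadicallyClose x A), add_comm]
  exact add_le_add (card_filter_not_dyadicallyClose_le hA hN) (card_le_card hsub)

end DyadicOdds

theorem card_filter_dvd_Ioc_le {Q : ℕ} (hQ : Q ≠ 0) (M : ℕ) {σ : ℝ} (hσ : 0 ≤ σ) :
    (#{d ∈ Ioc M (2 * M) | d ∣ Q} : ℝ) ≤
      (2 * M) ^ σ * ∑ d ∈ Q.divisors, (d : ℝ) ^ (-σ) := by
  rw [card_eq_sum_ones, Nat.cast_sum, Nat.cast_one, mul_sum]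
  refine (sum_le_sum fun d hd => ?_).trans (sum_le_sum_of_subset_of_nonneg
    (fun d hd => Nat.mem_divisors.2 ⟨(mem_filter.1 hd).2, hQ⟩) fun d _ _ => by positivity)
  obtain ⟨hMd, hd2M⟩ := mem_Ioc.1 (mem_filter.1 hd).1
  have hd : (0 : ℝ) < d := by exact_mod_cast (Nat.zero_le M).trans_lt hMd
  rw [rpow_neg hd.le, ← div_eq_mul_inv, ← div_rpow (by positivity) hd.le]
  exact one_le_rpow ((one_le_div hd).2 (by exact_mod_cast hd2M)) hσ

theorem sum_divisors_rpow_neg_le_prod {Q : ℕ} (hQ : Q ≠ 0) {σ : ℝ} (hσ : 0 < σ) :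
    ∑ d ∈ Q.divisors, (d : ℝ) ^ (-σ) ≤
      ∏ p ∈ Q.primeFactors, (1 - (p : ℝ) ^ (-σ))⁻¹ := by
  let f : ArithmeticFunction ℝ := ⟨fun d => (d : ℝ) ^ (-σ), by simp [hσ.ne']⟩
  have hf : f.IsMultiplicative := by
    refine ArithmeticFunction.IsMultiplicative.iff_ne_zero.2 ⟨by simp [f], fun _ _ _ => ?_⟩
    simp only [f, ArithmeticFunction.coe_mk, Nat.cast_mul]
    exact mul_rpow (Nat.cast_nonneg _) (Nat.cast_nonneg _)
  have hζf := (ArithmeticFunction.isMultiplicative_zeta.natCast (R := ℝ)).mul hf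
  show ∑ d ∈ Q.divisors, f d ≤ _
  rw [← ArithmeticFunction.coe_zeta_mul_apply, hζf.multiplicative_factorization _ hQ,
    Finsupp.prod, Nat.support_factorization]
  refine prod_le_prod (fun p _ => ?_) fun p hp => ?_
  · rw [ArithmeticFunction.coe_zeta_mul_apply]
    exact sum_nonneg fun d _ => rpow_nonneg (Nat.cast_nonneg d) _
  have hp := Nat.prime_of_mem_primeFactors hp
  have hr : (p : ℝ) ^ (-σ) < 1 :=
    rpow_lt_one_of_one_lt_of_neg (by exact_mod_cast hp.one_lt) (by linarith)
  rw [ArithmeticFunction.coe_zeta_mul_apply, Nat.sum_divisors_prime_pow hp]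
  calc ∑ i ∈ range (Q.factorization p + 1), f (p ^ i)
      = ∑ i ∈ Ico 0 (Q.factorization p + 1), ((p : ℝ) ^ (-σ)) ^ i := by
        rw [range_eq_Ico]
        refine sum_congr rfl fun i _ => ?_
        simp only [f, ArithmeticFunction.coe_mk, Nat.cast_pow]
        rw [← rpow_natCast, ← rpow_mul (Nat.cast_nonneg _), mul_comm,
          rpow_mul (Nat.cast_nonneg _), rpow_natCast]
    _ ≤ ((p : ℝ) ^ (-σ)) ^ 0 / (1 - (p : ℝ) ^ (-σ)) :=
        geom_sum_Ico_le_of_lt_one (by positivity) hr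
    _ = (1 - (p : ℝ) ^ (-σ))⁻¹ := by rw [pow_zero, one_div]

theorem sum_le_sum_range_of_antitoneOn {f : ℝ → ℝ} {c : ℕ}
    (hf : AntitoneOn f (Set.Ici (c : ℝ))) (F : Finset ℕ) (hF : ∀ p ∈ F, c ≤ p) :
    ∑ p ∈ F, f p ≤ ∑ i ∈ range #F, f (c + i) := by
  induction F using Finset.induction_on_max with
  | empty => simp
  | insert a s has ih =>
    have ha : a ∉ s := fun h => lt_irrefl a (has a h)
    have hca := hF a (mem_insert_self a s)
    have hcard : #s ≤ a - c := by
      calc #s ≤ #(Ico c a) := card_le_card fun p hp =>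
            mem_Ico.2 ⟨hF p (mem_insert_of_mem hp), has p hp⟩
        _ = a - c := Nat.card_Ico c a
    rw [sum_insert ha, card_insert_of_notMem ha, sum_range_succ, add_comm]
    refine add_le_add (ih fun p hp => hF p (mem_insert_of_mem hp)) (hf ?_ ?_ ?_)
    · simp
    · simpa using hca
    · have : c + #s ≤ a := by omega
      exact_mod_cast this

theorem sum_rpow_neg_le_of_two_le {σ : ℝ} (hσ0 : 0 < σ) (hσ1 : σ < 1) (F : Finset ℕ)
    (hF : ∀ p ∈ F, 2 ≤ p) :
    ∑ p ∈ F, (p : ℝ) ^ (-σ) ≤ (#F + 1 : ℝ) ^ (1 - σ) / (1 - σ) := by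
  have hanti : AntitoneOn (fun y : ℝ => y ^ (-σ)) (Set.Ici 1) :=
    (antitoneOn_rpow_Ioi_of_exponent_nonpos (by linarith)).mono fun y (hy : 1 ≤ y) =>
      show 0 < y by linarith
  calc ∑ p ∈ F, (p : ℝ) ^ (-σ) ≤ ∑ i ∈ range #F, ((2 : ℕ) + (i : ℝ)) ^ (-σ) :=
        sum_le_sum_range_of_antitoneOn
          (hanti.mono fun y (hy : (2 : ℝ) ≤ y) => show 1 ≤ y by linarith) F hF
    _ = ∑ i ∈ range #F, (1 + ((i + 1 : ℕ) : ℝ)) ^ (-σ) := by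
        refine sum_congr rfl fun i _ => ?_
        push_cast; ring_nf
    _ ≤ ∫ y in (1 : ℝ)..1 + #F, y ^ (-σ) :=
        AntitoneOn.sum_le_integral (hanti.mono fun y hy => hy.1)
    _ = ((1 + #F : ℝ) ^ (1 - σ) - 1) / (1 - σ) := by
        rw [integral_rpow (Or.inl (by linarith)), one_rpow]
        ring_nf
    _ ≤ (#F + 1 : ℝ) ^ (1 - σ) / (1 - σ) := by
        rw [add_comm (1 : ℝ)]
        gcongr
        linarith

theorem inv_one_sub_le_exp {r : ℝ} (hr0 : 0 ≤ r) (hr : r ≤ 2 / 3) :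
    (1 - r)⁻¹ ≤ exp (3 * r) := by
  have h : 0 < 1 - r := by linarith
  calc (1 - r)⁻¹ ≤ 1 + 3 * r := by
        rw [inv_le_iff_one_le_mul₀ h]
        nlinarith
    _ ≤ exp (3 * r) := by linarith [add_one_le_exp (3 * r)]

theorem two_rpow_neg_three_quarters_le : (2 : ℝ) ^ (-(3 / 4 : ℝ)) ≤ 2 / 3 := by
  have h : (3 / 2 : ℝ) ≤ 2 ^ (3 / 4 : ℝ) := by
    refine (pow_le_pow_iff_left₀ (by norm_num) (by positivity) (four_ne_zero)).1 ?_
    rw [← rpow_natCast (2 ^ (3 / 4 : ℝ)), ← rpow_mul zero_le_two]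
    norm_num
  rw [rpow_neg zero_le_two]
  calc (2 ^ (3 / 4 : ℝ))⁻¹ ≤ (3 / 2 : ℝ)⁻¹ := inv_anti₀ (by norm_num) h
    _ = 2 / 3 := by norm_num

theorem card_filter_dvd_Ioc_le_exp {Q : ℕ} (hQ : Q ≠ 0) (M : ℕ) :
    (#{d ∈ Ioc M (2 * M) | d ∣ Q} : ℝ) ≤
      (2 * M) ^ (3 / 4 : ℝ) * exp (12 * (#Q.primeFactors + 1 : ℝ) ^ (1 / 4 : ℝ)) := by
  have hprime : ∀ p ∈ Q.primeFactors, 2 ≤ p := fun p hp =>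
    (Nat.prime_of_mem_primeFactors hp).two_le
  have hr : ∀ p ∈ Q.primeFactors, (p : ℝ) ^ (-(3 / 4 : ℝ)) ≤ 2 / 3 := fun p hp =>
    (rpow_le_rpow_of_nonpos two_pos (by exact_mod_cast hprime p hp) (by norm_num)).trans
      two_rpow_neg_three_quarters_le
  have hsum := sum_rpow_neg_le_of_two_le (σ := 3 / 4) (by norm_num) (by norm_num) _ hprime
  calc (#{d ∈ Ioc M (2 * M) | d ∣ Q} : ℝ)
      ≤ (2 * M) ^ (3 / 4 : ℝ) * ∑ d ∈ Q.divisors, (d : ℝ) ^ (-(3 / 4 : ℝ)) :=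
        card_filter_dvd_Ioc_le hQ M (by norm_num)
    _ ≤ (2 * M) ^ (3 / 4 : ℝ) *
          ∏ p ∈ Q.primeFactors, (1 - (p : ℝ) ^ (-(3 / 4 : ℝ)))⁻¹ := by
        gcongr
        exact sum_divisors_rpow_neg_le_prod hQ (by norm_num)
    _ ≤ (2 * M) ^ (3 / 4 : ℝ) *
          ∏ p ∈ Q.primeFactors, exp (3 * (p : ℝ) ^ (-(3 / 4 : ℝ))) := by
        gcongr _ * ?_
        exact prod_le_prod (fun p hp => inv_nonneg.2 (by linarith [hr p hp]))
          fun p hp => inv_one_sub_le_exp (by positivity) (hr p hp)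
    _ = (2 * M) ^ (3 / 4 : ℝ) *
          exp (3 * ∑ p ∈ Q.primeFactors, (p : ℝ) ^ (-(3 / 4 : ℝ))) := by
        rw [← exp_sum, mul_sum]
    _ ≤ (2 * M) ^ (3 / 4 : ℝ) * exp (12 * (#Q.primeFactors + 1 : ℝ) ^ (1 / 4 : ℝ)) := by
        gcongr _ * exp ?_
        norm_num at hsum
        linarith

theorem two_pow_card_primeFactors_le {Q : ℕ} (hQ : Q ≠ 0) : 2 ^ #Q.primeFactors ≤ Q :=
  calc 2 ^ #Q.primeFactors = ∏ _p ∈ Q.primeFactors, 2 := (prod_const 2).symm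
    _ ≤ ∏ p ∈ Q.primeFactors, p :=
      prod_le_prod' fun _ hp => (Nat.prime_of_mem_primeFactors hp).two_le
    _ ≤ Q := Nat.le_of_dvd (Nat.pos_of_ne_zero hQ) (Nat.prod_primeFactors_dvd Q)

theorem two_mul_two_pow_rpow_mul_exp_le {A : ℕ} (hA : 10 ^ 5 ≤ A) {ω : ℝ} (hω : 0 ≤ ω)
    (hω' : ω + 1 ≤ (2 * A + 3) ^ 2) :
    (2 * 2 ^ A : ℝ) ^ (3 / 4 : ℝ) * exp (12 * (ω + 1) ^ (1 / 4 : ℝ)) ≤ 2 ^ A / 4 := by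
  have hroot : (ω + 1) ^ (1 / 4 : ℝ) ≤ √(2 * A + 3) := by
    calc (ω + 1) ^ (1 / 4 : ℝ) ≤ ((2 * A + 3 : ℝ) ^ 2) ^ (1 / 4 : ℝ) := by gcongr
      _ = √(2 * A + 3) := by
        rw [sqrt_eq_rpow, ← rpow_natCast, ← rpow_mul (by positivity)]
        norm_num
  have hsqrt : √(2 * A + 3 : ℝ) ≤ (2 * A + 3) / 300 + 75 := by
    nlinarith [sq_nonneg (√(2 * A + 3 : ℝ) - 150),
      sq_sqrt (by positivity : (0 : ℝ) ≤ 2 * A + 3)]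
  have hAR : (10 ^ 5 : ℝ) ≤ A := by exact_mod_cast hA
  have hlog2 := log_two_gt_d9
  have hpow : ∀ y : ℝ, (2 : ℝ) ^ y = exp (y * log 2) := fun y => by
    rw [rpow_def_of_pos two_pos, mul_comm]
  calc (2 * 2 ^ A : ℝ) ^ (3 / 4 : ℝ) * exp (12 * (ω + 1) ^ (1 / 4 : ℝ))
      = exp ((A + 1) * (3 / 4) * log 2 + 12 * (ω + 1) ^ (1 / 4 : ℝ)) := by
        rw [exp_add, ← rpow_natCast, ← rpow_one_add' zero_le_two (by positivity),
          ← rpow_mul zero_le_two, hpow]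
        ring_nf
    _ ≤ exp ((A - 2) * log 2) := by
        gcongr
        nlinarith
    _ = 2 ^ A / 4 := by
        rw [← hpow, rpow_sub two_pos, rpow_natCast]
        norm_num

theorem two_pow_div_four_le_card_farDenominators {N A : ℕ} {x : ℝ} (hA : 10 ^ 5 ≤ A)
    (hN : 2 ^ (2 * A + 1) ≤ N) (hxA : 2 ^ A ≤ x)
    (hlogx : log x ≤ (2 * A + 3) ^ 2 * log 2 / 2) :
    (2 : ℝ) ^ A / 4 ≤ #(farDenominators N x) := by
  have hx : 0 < x := lt_of_lt_of_le (by positivity) hxA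
  obtain ⟨Q, hQ, hQx, hcount⟩ := exists_two_pow_le_card_add_card (by omega) hN hxA
  have hω : (#Q.primeFactors : ℝ) + 1 ≤ (2 * A + 3) ^ 2 := by
    have h2ω : (2 : ℝ) ^ #Q.primeFactors ≤ 2 * x :=
      le_trans (by exact_mod_cast two_pow_card_primeFactors_le hQ) hQx
    have hlog := log_le_log (by positivity) h2ω
    rw [log_pow, log_mul two_ne_zero hx.ne'] at hlog
    have hω' : (#Q.primeFactors : ℝ) ≤ 1 + (2 * A + 3) ^ 2 / 2 :=
      le_of_mul_le_mul_right (by linarith) (log_pos one_lt_two)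
    have h9 : (9 : ℝ) ≤ (2 * A + 3) ^ 2 := by nlinarith [(Nat.cast_nonneg A : (0 : ℝ) ≤ A)]
    linarith
  have hdiv : (#{d ∈ Ioc (2 ^ A) (2 * 2 ^ A) | d ∣ Q} : ℝ) ≤ 2 ^ A / 4 := by
    refine (card_filter_dvd_Ioc_le_exp hQ _).trans ?_
    push_cast
    exact two_mul_two_pow_rpow_mul_exp_le hA (by positivity) hω
  have hcount' := (Nat.cast_le (α := ℝ)).2 hcount
  push_cast at hcount'
  rw [pow_sub₀ _ two_ne_zero (by omega : 1 ≤ A), pow_one] at hcount'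
  linarith

theorem abs_rhoN_lt_of_two_pow_le {N A : ℕ} {x : ℝ} (hA : 10 ^ 5 ≤ A)
    (hN : 2 ^ (2 * A + 1) ≤ N) (hxA : 2 ^ A ≤ x)
    (hlogx : log x ≤ (2 * A + 3) ^ 2 * log 2 / 2) :
    |rhoN N x| < exp (-(1 / 100) * exp (1 / 10 * √(log x))) := by
  refine abs_rhoN_lt_of_le_card ?_ (two_pow_div_four_le_card_farDenominators hA hN hxA hlogx)
  have hlog2 := log_two_gt_d9
  have hlog2' := log_two_lt_d9
  have hsqrt : √(log x) ≤ 2 * A + 3 := sqrt_le_iff.2 ⟨by positivity, by nlinarith⟩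
  have hAR : (10 ^ 5 : ℝ) ≤ A := by exact_mod_cast hA
  calc exp (1 / 10 * √(log x)) / 100 ≤ exp (A * log 2) / 100 := by
        gcongr exp ?_ / _
        nlinarith
    _ < 2 ^ A / 4 / 3 := by
        rw [exp_nat_mul, exp_log two_pos]
        linarith [pow_pos (two_pos : (0 : ℝ) < 2) A]

theorem log_le_of_le_exp_mul_log_sq {C x : ℝ} {N : ℕ} (hC0 : 0 ≤ C) (hC : C < 1 / log 4)
    (hN : N ≠ 0) (hx : 0 < x) (hxN : x ≤ exp (C * log N ^ 2)) :
    log x ≤ (Nat.log 2 N + 1) ^ 2 * log 2 / 2 := by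
  have hlog4 : log 4 = 2 * log 2 := by
    rw [show (4 : ℝ) = 2 ^ 2 by norm_num, log_pow, Nat.cast_ofNat]
  have hC2 : C * log 2 < 1 / 2 := by
    rw [lt_div_iff₀ (by rw [hlog4]; positivity), hlog4] at hC
    linarith
  have hlogN : log N ≤ (Nat.log 2 N + 1) * log 2 := by
    rw [← Nat.cast_add_one, ← log_pow]
    exact log_le_log (by positivity) (by exact_mod_cast (Nat.lt_pow_succ_log_self one_lt_two N).le)
  have hlogN0 : 0 ≤ log N := log_natCast_nonneg N
  calc log x ≤ C * log N ^ 2 := (log_le_iff_le_exp hx).2 hxN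
    _ ≤ C * ((Nat.log 2 N + 1) * log 2) ^ 2 := by gcongr
    _ = (C * log 2) * ((Nat.log 2 N + 1) ^ 2 * log 2) := by ring
    _ ≤ 1 / 2 * ((Nat.log 2 N + 1) ^ 2 * log 2) := by gcongr
    _ = (Nat.log 2 N + 1) ^ 2 * log 2 / 2 := by ring

theorem statement10 (C : ℝ) (hC0 : 0 < C) (hC : C < 1 / Real.log 4) :
    ∃ B > 0, ∃ E > 0, ∃ N₀ : ℕ, ∀ N : ℕ, N₀ ≤ N → ∀ x : ℝ,
      1 ≤ x → x ≤ Real.exp (C * (Real.log N) ^ 2) →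
      |rhoN N x| < Real.exp (-B * Real.exp (E * Real.sqrt (Real.log x))) := by
  refine ⟨1 / 100, by norm_num, 1 / 10, by norm_num, 2 ^ 10 ^ 6, fun N hN x hx hxN => ?_⟩
  have hN0 : N ≠ 0 := (lt_of_lt_of_le (by positivity) hN).ne'
  set L := Nat.log 2 N
  set A := (L - 1) / 2
  have hL : 10 ^ 6 ≤ L := Nat.le_log_of_pow_le one_lt_two hN
  have hLN : 2 ^ L ≤ N := Nat.pow_log_le_self 2 hN0
  rcases le_or_gt x (2 ^ A) with hxA | hxA
  · refine abs_rhoN_lt_of_four_mul_le hx ?_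
    calc 4 * x ≤ 2 ^ (A + 2) := by rw [pow_add]; linarith
      _ ≤ 2 ^ L := pow_le_pow_right₀ one_le_two (by omega)
      _ ≤ N := by exact_mod_cast hLN
  · refine abs_rhoN_lt_of_two_pow_le (by omega)
      ((Nat.pow_le_pow_right two_pos (by omega)).trans hLN) hxA.le ?_
    calc log x ≤ (L + 1) ^ 2 * log 2 / 2 :=
          log_le_of_le_exp_mul_log_sq hC0.le hC hN0 (by linarith) hxN
      _ ≤ (2 * A + 3) ^ 2 * log 2 / 2 := by
          gcongr ?_ ^ 2 * _ / _
          exact_mod_cast (by omega : L + 1 ≤ 2 * A + 3)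
end

section
/- There exists a constant C' > 0 such that for all sufficiently large positive integers N and all real x with N ≤ x ≤ exp(C' (log N)²), one has |ρ_N(x)| < 1/x². -/
open Real Finset

lemma abs_cos_pi_mul_le_s14 (t : ℝ) : |cos (π * t)| ≤ 1 - 2 * (t - round t) ^ 2 := by
  set u := t - round t
  have hu : |π * u| ≤ π / 2 := by
    rw [abs_mul, abs_of_pos pi_pos]
    nlinarith [abs_sub_round t, pi_pos]
  have hcos : cos (π * t) = (-1) ^ round t * cos (π * u) := by
    rw [← cos_add_int_mul_pi]; congr 1; simp only [u]; ring
  rw [hcos, abs_mul, abs_neg_one_zpow, one_mul,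
    abs_of_nonneg (cos_nonneg_of_neg_pi_div_two_le_of_le (abs_le.1 hu).1 (abs_le.1 hu).2)]
  calc cos (π * u) ≤ 1 - 2 / π ^ 2 * (π * u) ^ 2 :=
        cos_le_one_sub_mul_cos_sq (hu.trans (by linarith [pi_pos]))
    _ = 1 - 2 * u ^ 2 := by field_simp

lemma abs_rhoN_le_exp_s14 {N : ℕ} {x δ : ℝ} {s : Finset ℕ} (hs : s ⊆ Icc 1 N) (hδ : 0 ≤ δ)
    (hfar : ∀ n ∈ s, δ ≤ |x / n - round (x / n)|) :
    |rhoN N x| ≤ exp (-(2 * δ ^ 2 * #s)) := by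
  have hcos : ∀ n ∈ s, |cos (π * x / n)| ≤ exp (-(2 * δ ^ 2)) := fun n hn => calc
    |cos (π * x / n)| ≤ 1 - 2 * (x / n - round (x / n)) ^ 2 := by
      rw [mul_div_assoc]; exact abs_cos_pi_mul_le_s14 _
    _ ≤ 1 - 2 * δ ^ 2 := by
      nlinarith [sq_abs (x / n - round (x / n)), pow_le_pow_left₀ hδ (hfar n hn) 2]
    _ ≤ exp (-(2 * δ ^ 2)) := by linarith [add_one_le_exp (-(2 * δ ^ 2))]
  calc |rhoN N x| = ∏ n ∈ Icc 1 N, |cos (π * x / n)| := by rw [rhoN, abs_prod]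
    _ ≤ ∏ n ∈ s, |cos (π * x / n)| :=
        prod_le_prod_of_subset_of_le_one hs (fun _ _ => abs_nonneg _)
          fun _ _ _ => abs_cos_le_one _
    _ ≤ ∏ _n ∈ s, exp (-(2 * δ ^ 2)) := prod_le_prod (fun _ _ => abs_nonneg _) hcos
    _ = exp (-(2 * δ ^ 2 * #s)) := by rw [prod_const, ← exp_nat_mul]; ring_nf

lemma natCast_dvd_round_of_abs_sub_round_div_lt {y : ℝ} {j : ℕ} (hj : 0 < j)
    (h : |y / j - round (y / j)| < 1 / (2 * j)) : (j : ℤ) ∣ round y := by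
  have hj' : (0 : ℝ) < j := by exact_mod_cast hj
  have hnear : |y - (j * round (y / j) : ℤ)| < 1 / 2 := calc
    |y - (j * round (y / j) : ℤ)| = j * |y / j - round (y / j)| := by
      rw [← abs_of_pos hj', ← abs_mul, abs_of_pos hj']; push_cast; field_simp
    _ < j * (1 / (2 * j)) := mul_lt_mul_of_pos_left h hj'
    _ = 1 / 2 := by field_simp
  refine ⟨round (y / j), round_eq_iff.2 ⟨?_, ?_⟩⟩ <;> linarith [abs_lt.1 hnear]

lemma exists_le_abs_sub_round_div {y : ℝ} (hy : 1 ≤ y) {M : ℕ}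
    (hlcm : y + 1 / 2 < ((Icc 1 M).lcm id : ℕ)) :
    ∃ j ∈ Icc 1 M, 1 / (2 * M) ≤ |y / j - round (y / j)| := by
  by_contra! hnear
  have hdvd : (Icc 1 M).lcm id ∣ (round y).natAbs := by
    refine Finset.lcm_dvd fun j hj => Int.natCast_dvd.1 ?_
    obtain ⟨hj1, hjM⟩ := mem_Icc.1 hj
    refine natCast_dvd_round_of_abs_sub_round_div_lt hj1 ((hnear j hj).trans_le ?_)
    gcongr
    exact hjM
  have hround := abs_le.1 (abs_sub_round y)
  have hpos : 0 < round y := by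
    have : (0 : ℝ) < round y := by linarith
    exact_mod_cast this
  have hle : (((Icc 1 M).lcm id : ℕ) : ℝ) ≤ round y := by
    rw [← abs_of_pos hpos, ← Nat.cast_natAbs]
    exact_mod_cast Nat.le_of_dvd (Int.natAbs_pos.2 hpos.ne') hdvd
  linarith

lemma two_pow_choose_two_le_lcm (r : ℕ) : 2 ^ r.choose 2 ≤ (Icc 1 (2 ^ r)).lcm id := by
  choose p hp using fun i : ℕ => Nat.exists_prime_lt_and_le_two_mul (2 ^ i) (by positivity)
  have hmono : StrictMono p := strictMono_nat_of_lt_succ fun i => by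
    have := (hp i).2.2; have := (hp (i + 1)).2.1; rw [pow_succ] at *; omega
  have hdvd : ∏ i ∈ range r, p i ∣ (Icc 1 (2 ^ r)).lcm id := by
    have := prod_primes_dvd (s := (range r).image p) ((Icc 1 (2 ^ r)).lcm id)
      (fun q hq => ?_) fun q hq => ?_
    · rwa [prod_image hmono.injective.injOn] at this
    all_goals obtain ⟨i, hi, rfl⟩ := mem_image.1 hq
    · exact (hp i).1.prime
    · refine dvd_lcm (mem_Icc.2 ⟨(hp i).1.one_lt.le, (hp i).2.2.trans ?_⟩)
      rw [← pow_succ']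
      exact Nat.pow_le_pow_right two_pos (mem_range.1 hi)
  have hlcm : (Icc 1 (2 ^ r)).lcm id ≠ 0 := by
    simp [Finset.lcm_eq_zero_iff]
  calc 2 ^ r.choose 2 = ∏ i ∈ range r, 2 ^ i := by
        rw [prod_pow_eq_pow_sum, sum_range_id, Nat.choose_two_right]
    _ ≤ ∏ i ∈ range r, p i := prod_le_prod' fun i _ => (hp i).2.1.le
    _ ≤ _ := Nat.le_of_dvd (Nat.pos_of_ne_zero hlcm) hdvd

lemma le_mul_card_filter_of_forall_exists_mul {P : ℕ → Prop} [DecidablePred P] {M K : ℕ}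
    (h : ∀ k ∈ Icc 1 K, ∃ j ∈ Icc 1 M, P (j * k)) :
    K ≤ M * #{n ∈ Icc 1 (M * K) | P n} := by
  choose! j hj hP using h
  have himage : (Icc 1 K).image (fun k => j k * k) ⊆ {n ∈ Icc 1 (M * K) | P n} := by
    intro n hn
    obtain ⟨k, hk, rfl⟩ := mem_image.1 hn
    obtain ⟨hj1, hjM⟩ := mem_Icc.1 (hj k hk)
    obtain ⟨hk1, hkK⟩ := mem_Icc.1 hk
    exact mem_filter.2 ⟨mem_Icc.2 ⟨one_le_mul hj1 hk1, Nat.mul_le_mul hjM hkK⟩, hP k hk⟩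
  have hfiber : ∀ n ∈ (Icc 1 K).image (fun k => j k * k),
      #{k ∈ Icc 1 K | j k * k = n} ≤ M := by
    intro n _
    calc #{k ∈ Icc 1 K | j k * k = n} ≤ #(Icc 1 M) := by
          refine card_le_card_of_injOn j (fun k hk => hj k (mem_filter.1 hk).1) ?_
          intro a ha b hb hab
          obtain ⟨haK, rfl⟩ := mem_filter.1 ha
          obtain ⟨-, hb⟩ := mem_filter.1 hb
          refine Nat.eq_of_mul_eq_mul_left (mem_Icc.1 (hj a haK)).1 ?_
          rw [← hb, hab]
      _ = M := by simp
  calc K = #(Icc 1 K) := by simp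
    _ ≤ M * #((Icc 1 K).image fun k => j k * k) := card_le_mul_card_image _ M hfiber
    _ ≤ M * #{n ∈ Icc 1 (M * K) | P n} := Nat.mul_le_mul_left M (card_le_card himage)

lemma abs_rhoN_le_exp_neg_two_pow {N r : ℕ} {x : ℝ} (hN : 2 ^ (5 * r) ≤ N) (hx : N ≤ x)
    (hxr : x + 1 / 2 < 2 ^ r.choose 2) : |rhoN N x| ≤ exp (-(2 ^ r / 2)) := by
  set M := 2 ^ r
  set K := N / M
  have hM : 0 < M := by positivity
  have hK : M ^ 4 ≤ K := (Nat.le_div_iff_mul_le hM).2 <| by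
    rwa [← pow_succ, ← pow_mul, mul_comm]
  have hfar : ∀ k ∈ Icc 1 K, ∃ j ∈ Icc 1 M,
      1 / (2 * M) ≤ |x / ↑(j * k) - round (x / ↑(j * k))| := by
    intro k hk
    obtain ⟨hk1, hkK⟩ := mem_Icc.1 hk
    have hk0 : (0 : ℝ) < k := by exact_mod_cast hk1
    have hkx : (k : ℝ) ≤ x := le_trans (by exact_mod_cast hkK.trans (Nat.div_le_self N M)) hx
    have hlcm : x / k + 1 / 2 < ((Icc 1 M).lcm id : ℕ) := calc
      x / k + 1 / 2 ≤ x + 1 / 2 := by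
        gcongr; exact div_le_self (hk0.le.trans hkx) (by exact_mod_cast hk1)
      _ < 2 ^ r.choose 2 := hxr
      _ ≤ _ := by exact_mod_cast two_pow_choose_two_le_lcm r
    obtain ⟨j, hj, hfar⟩ := exists_le_abs_sub_round_div ((one_le_div hk0).2 hkx) hlcm
    rw [div_div, ← Nat.cast_mul, mul_comm k] at hfar
    exact ⟨j, hj, hfar⟩
  have hcount := le_mul_card_filter_of_forall_exists_mul
    (P := fun n : ℕ => 1 / (2 * (M : ℝ)) ≤ |x / n - round (x / n)|) hfar
  set s : Finset ℕ := {n ∈ Icc 1 (M * K) | 1 / (2 * (M : ℝ)) ≤ |x / n - round (x / n)|}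
  have hs : s ⊆ Icc 1 N := (filter_subset _ _).trans (Icc_subset_Icc_right (Nat.mul_div_le N M))
  have hcard : (M : ℝ) ^ 3 ≤ #s := by
    exact_mod_cast Nat.le_of_mul_le_mul_left (by rw [← pow_succ']; exact hK.trans hcount) hM
  calc |rhoN N x| ≤ exp (-(2 * (1 / (2 * M)) ^ 2 * #s)) :=
        abs_rhoN_le_exp_s14 hs (by positivity) fun n hn => (mem_filter.1 hn).2
    _ ≤ exp (-(2 ^ r / 2)) := by
      have hM' : (0 : ℝ) < M := by exact_mod_cast hM
      have : (2 : ℝ) ^ r = M := by simp [M]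
      rw [exp_le_exp, neg_le_neg_iff, this]
      calc (M : ℝ) / 2 = 2 * (1 / (2 * M)) ^ 2 * M ^ 3 := by field_simp
        _ ≤ _ := by gcongr

lemma succ_sq_lt_two_pow_succ {r : ℕ} (hr : 4 ≤ r) : (r + 1) ^ 2 < 2 ^ (r + 1) := by
  induction r, hr using Nat.le_induction with
  | base => norm_num
  | succ n hn ih => rw [pow_succ 2]; nlinarith

lemma add_half_lt_two_pow_choose_two {r : ℕ} (hr : 4 ≤ r) {x : ℝ} (hx : 0 < x)
    (hlogx : log x ≤ (r + 1) ^ 2 * log 2 / 8) : x + 1 / 2 < 2 ^ r.choose 2 := by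
  have hr' : (4 : ℝ) ≤ r := by exact_mod_cast hr
  have hxexp := (log_le_iff_le_exp hx).1 hlogx
  have hexp := one_le_exp (by positivity : 0 ≤ (r + 1 : ℝ) ^ 2 * log 2 / 8)
  calc x + 1 / 2 < 2 * exp ((r + 1) ^ 2 * log 2 / 8) := by linarith
    _ = exp (((r + 1) ^ 2 / 8 + 1) * log 2) := by
      rw [add_mul, one_mul, exp_add, exp_log two_pos]; ring_nf
    _ ≤ exp (r.choose 2 * log 2) := by
      gcongr
      rw [Nat.cast_choose_two]; nlinarith
    _ = 2 ^ r.choose 2 := by rw [exp_nat_mul, exp_log two_pos]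

lemma four_mul_log_lt_two_pow {r : ℕ} (hr : 4 ≤ r) {x : ℝ}
    (hlogx : log x ≤ (r + 1) ^ 2 * log 2 / 8) : 4 * log x < 2 ^ r := by
  have hpow : ((r + 1) ^ 2 : ℝ) < 2 ^ (r + 1) := by exact_mod_cast succ_sq_lt_two_pow_succ hr
  have hlog2 : log 2 < 1 := log_two_lt_d9.trans (by norm_num)
  have : (r + 1 : ℝ) ^ 2 * log 2 < (r + 1) ^ 2 := mul_lt_of_lt_one_right (by positivity) hlog2
  rw [pow_succ (2 : ℝ)] at hpow
  linarith

theorem statement14 :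
    ∃ C' > (0 : ℝ), ∃ N₀ : ℕ, ∀ N : ℕ, N₀ ≤ N → ∀ x : ℝ,
      (N : ℝ) ≤ x → x ≤ Real.exp (C' * (Real.log N) ^ 2) →
      |rhoN N x| < 1 / x ^ 2 := by
  refine ⟨1 / 200, by norm_num, 2 ^ 20, fun N hN x hNx hx => ?_⟩
  set r := Nat.log 2 N / 5
  have hN0 : N ≠ 0 := ((Nat.two_pow_pos 20).trans_le hN).ne'
  have hr : 4 ≤ r := by have := Nat.le_log_of_pow_le one_lt_two hN; omega
  have hNr : 2 ^ (5 * r) ≤ N :=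
    (Nat.pow_le_pow_right two_pos (by omega)).trans (Nat.pow_log_le_self 2 hN0)
  have hN1 : (1 : ℝ) ≤ N := by exact_mod_cast Nat.one_le_iff_ne_zero.2 hN0
  have hx0 : 0 < x := by linarith
  have hlogN : log N ≤ 5 * (r + 1) * log 2 := by
    have hlt : N < 2 ^ (5 * (r + 1)) := (Nat.lt_pow_succ_log_self one_lt_two N).trans_le
      (Nat.pow_le_pow_right two_pos (by omega))
    have := log_lt_log (by positivity) (by exact_mod_cast hlt : (N : ℝ) < 2 ^ (5 * (r + 1)))
    rw [log_pow] at this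
    push_cast at this
    linarith
  have hlogx : log x ≤ (r + 1) ^ 2 * log 2 / 8 := calc
    log x ≤ 1 / 200 * log N ^ 2 := (log_le_iff_le_exp hx0).2 hx
    _ ≤ 1 / 200 * (5 * (r + 1) * log 2) ^ 2 := by gcongr
    _ ≤ (r + 1) ^ 2 * log 2 / 8 := by nlinarith [log_two_lt_d9, log_pos one_lt_two]
  calc |rhoN N x| ≤ exp (-(2 ^ r / 2)) :=
        abs_rhoN_le_exp_neg_two_pow hNr hNx (add_half_lt_two_pow_choose_two hr hx0 hlogx)
    _ < exp (-(2 * log x)) := by gcongr; linarith [four_mul_log_lt_two_pow hr hlogx]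
    _ = 1 / x ^ 2 := by
      rw [exp_neg, show 2 * log x = ((2 : ℕ) : ℝ) * log x by norm_num, exp_nat_mul, exp_log hx0,
        one_div]
end

section
/- For all a > 0 and δ ∈ (0, 1/2) there exists k₀ (depending on a) such that for all integers k ≥ k₀, all integers N > e^{ak}, and all real x ∈ [e^{a k²}, N^k], one has #S_k(N, δ, x) ≥ ((1/2 − δ)(2^{−1/k} − (3/2)e^{−a}) − (2/3)^k) · x^{1/k}. -/
open scoped Classical

/-- Distance from a real number to the nearest integer. -/
noncomputable def distNearestInt (y : ℝ) : ℝ := |y - round y|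

/-- `S_k(N, δ, x) = {n ∈ {1,…,N} : ‖x/n^k‖ ≥ δ}`. -/
noncomputable def Sk (k N : ℕ) (δ x : ℝ) : Finset ℕ :=
  (Finset.Icc 1 N).filter (fun n => δ ≤ distNearestInt (x / (n : ℝ) ^ k))

/-!
For `i < M`, the `n ≤ N` with `x / n ^ k ∈ [i + 1 + δ, i + 2 - δ]` lie in `S_k(N, δ, x)` and
form disjoint blocks. The `i`-th block consists of the integers of an interval of length
`x^{1/k} ((i + 1 + δ)^{-1/k} - (i + 2 - δ)^{-1/k})`, so it has at least that length minus one
elements. By convexity of `t ↦ t^{-1/k}` the length is at least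
`(1 - 2δ) x^{1/k} ((i + 2)^{-1/k} - (i + 3)^{-1/k})`, and these bounds telescope to
`#S_k(N, δ, x) ≥ (1 - 2δ) x^{1/k} (2^{-1/k} - (M + 2)^{-1/k}) - M`. Taking
`M = ⌊((2/3) e^a)^k⌋` gives `(M + 2)^{-1/k} ≤ (3/2) e^{-a}`, while `x ≥ e^{a k²}` gives
`M ≤ (2/3)^k x^{1/k}`.
-/

open Finset Real

lemma le_distNearestInt_of_mem_Icc {m : ℤ} {δ y : ℝ} (h₁ : m + δ ≤ y) (h₂ : y ≤ m + 1 - δ) :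
    δ ≤ distNearestInt y := by
  rw [distNearestInt, le_abs']
  rcases le_or_gt (round y) m with h | h
  · have : (round y : ℝ) ≤ m := mod_cast h
    right; linarith
  · have : (m : ℝ) + 1 ≤ round y := mod_cast h
    left; linarith

lemma convexOn_rpow_of_nonpos {p : ℝ} (hp : p ≤ 0) :
    ConvexOn ℝ (Set.Ioi 0) fun t : ℝ ↦ t ^ p := by
  have hlog : ConvexOn ℝ (Set.Ioi 0) fun t ↦ p * log t :=
    (strictConcaveOn_log_Ioi.concaveOn.smul (neg_nonneg.mpr hp)).neg.congr fun t _ ↦ by simp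
  have himage : Convex ℝ ((fun t ↦ p * log t) '' Set.Ioi 0) :=
    (isPreconnected_Ioi.image _ ((continuousOn_log.mono fun t ht ↦
      (Set.mem_Ioi.mp ht).ne').const_smul p)).convex
  refine ((convexOn_exp.subset (Set.subset_univ _) himage).comp hlog
    (exp_monotone.monotoneOn _)).congr fun t ht ↦ ?_
  simp [rpow_def_of_pos (Set.mem_Ioi.mp ht), mul_comm]

lemma ConvexOn.slope_le_slope {f : ℝ → ℝ} {s : Set ℝ} (hf : ConvexOn ℝ s f) {a b c d : ℝ}
    (ha : a ∈ s) (hb : b ∈ s) (hc : c ∈ s) (hd : d ∈ s) (hab : a < b) (hbc : b ≤ c)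
    (hcd : c < d) :
    (f b - f a) / (b - a) ≤ (f d - f c) / (d - c) := by
  have hbd : b < d := hbc.trans_lt hcd
  calc (f b - f a) / (b - a) ≤ (f d - f b) / (d - b) := hf.slope_mono_adjacent ha hd hab hbd
    _ = (f b - f d) / (b - d) := by rw [← neg_div_neg_eq, neg_sub, neg_sub]
    _ ≤ (f c - f d) / (c - d) := hf.secant_mono hd hb hc hbd.ne hcd.ne hbc
    _ = (f d - f c) / (d - c) := by rw [← neg_div_neg_eq, neg_sub, neg_sub]

lemma mul_sub_rpow_le_sub_rpow {p t δ : ℝ} (hp : p ≤ 0) (ht : 0 < t + δ) (hδ0 : 0 ≤ δ)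
    (hδ : δ < 1 / 2) :
    (1 - 2 * δ) * ((t + 1) ^ p - (t + 2) ^ p) ≤ (t + δ) ^ p - (t + 1 - δ) ^ p := by
  have hslope := (convexOn_rpow_of_nonpos hp).slope_le_slope (a := t + δ) (b := t + 1 - δ)
    (c := t + 1) (d := t + 2) (by simp only [Set.mem_Ioi]; linarith)
    (by simp only [Set.mem_Ioi]; linarith) (by simp only [Set.mem_Ioi]; linarith)
    (by simp only [Set.mem_Ioi]; linarith) (by linarith) (by linarith) (by linarith)
  rw [show t + 1 - δ - (t + δ) = 1 - 2 * δ by ring, show t + 2 - (t + 1) = 1 by ring, div_one,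
    div_le_iff₀ (by linarith)] at hslope
  linarith

lemma mul_sub_rpow_le_sum_sub_rpow {p δ : ℝ} (hp : p ≤ 0) (hδ0 : 0 ≤ δ) (hδ : δ < 1 / 2)
    (M : ℕ) :
    (1 - 2 * δ) * (2 ^ p - ((M : ℝ) + 2) ^ p) ≤
      ∑ i ∈ range M, (((i : ℝ) + 1 + δ) ^ p - ((i : ℝ) + 2 - δ) ^ p) := by
  have htelescope : ∑ i ∈ range M, (((i : ℝ) + 2) ^ p - ((i : ℝ) + 3) ^ p) =
      2 ^ p - ((M : ℝ) + 2) ^ p := by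
    convert sum_range_sub' (fun i : ℕ ↦ ((i : ℝ) + 2) ^ p) M using 3 <;> push_cast <;> ring_nf
  rw [← htelescope, mul_sum]
  refine sum_le_sum fun i _ ↦ ?_
  have h := mul_sub_rpow_le_sub_rpow (t := (i : ℝ) + 1) hp (by positivity) hδ0 hδ
  rwa [show (i : ℝ) + 1 + 1 = i + 2 by ring, show (i : ℝ) + 1 + 2 = i + 3 by ring] at h

lemma sub_sub_one_le_card_Icc_ceil_floor {A B : ℝ} (hA : 0 ≤ A) :
    B - A - 1 ≤ #(Icc ⌈A⌉₊ ⌊B⌋₊) := by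
  rw [Nat.card_Icc]
  have hB : B - 1 < ⌊B⌋₊ := Nat.sub_one_lt_floor B
  have hA' : (⌈A⌉₊ : ℝ) < A + 1 := Nat.ceil_lt_add_one hA
  rcases le_total ⌈A⌉₊ (⌊B⌋₊ + 1) with h | h
  · rw [Nat.cast_sub h]; push_cast; linarith
  · rw [Nat.sub_eq_zero_of_le h]
    have : (⌊B⌋₊ : ℝ) + 1 ≤ ⌈A⌉₊ := mod_cast h
    push_cast; linarith

lemma sub_sub_one_le_card_filter_div_pow_mem_Icc {k N : ℕ} (hk : k ≠ 0) {x p q : ℝ}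
    (hx : 0 < x) (hxN : x ≤ (N : ℝ) ^ k) (hp : 1 ≤ p) (hq : 0 < q) :
    (x / p) ^ (k⁻¹ : ℝ) - (x / q) ^ (k⁻¹ : ℝ) - 1 ≤
      #((Icc 1 N).filter fun n : ℕ ↦ x / (n : ℝ) ^ k ∈ Set.Icc p q) := by
  have hk' : (0 : ℝ) < k := by positivity
  refine (sub_sub_one_le_card_Icc_ceil_floor (by positivity)).trans
    (Nat.cast_le.mpr (card_le_card ?_))
  intro n hn
  rw [mem_Icc, Nat.ceil_le, Nat.le_floor_iff (by positivity)] at hn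
  have hn0 : 0 < n := Nat.ceil_pos.mpr (by positivity) |>.trans_le (Nat.ceil_le.mpr hn.1)
  have hnk : 0 < (n : ℝ) ^ k := by positivity
  have hlow : x / q ≤ (n : ℝ) ^ k := by
    simpa using (rpow_inv_le_iff_of_pos (by positivity) n.cast_nonneg hk').mp hn.1
  have hup : (n : ℝ) ^ k ≤ x / p := by
    simpa using (le_rpow_inv_iff_of_pos n.cast_nonneg (by positivity) hk').mp hn.2
  have hnN : n ≤ N := by
    have : (n : ℝ) ^ k ≤ (N : ℝ) ^ k := hup.trans <| (div_le_self hx.le hp).trans hxN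
    exact_mod_cast (pow_le_pow_iff_left₀ n.cast_nonneg N.cast_nonneg hk).mp this
  refine mem_filter.mpr ⟨mem_Icc.mpr ⟨hn0, hnN⟩, ?_, ?_⟩
  · rwa [le_div_iff₀ hnk, ← le_div_iff₀' (by positivity)]
  · rwa [div_le_iff₀ hnk, ← div_le_iff₀' hq]

lemma le_card_Sk {k N : ℕ} (hk : k ≠ 0) {δ x : ℝ} (hδ0 : 0 < δ) (hδ : δ < 1 / 2) (hx : 0 < x)
    (hxN : x ≤ (N : ℝ) ^ k) (M : ℕ) :
    (1 - 2 * δ) * x ^ (k : ℝ)⁻¹ * (2 ^ (-(k : ℝ)⁻¹) - ((M : ℝ) + 2) ^ (-(k : ℝ)⁻¹)) - M ≤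
      #(Sk k N δ x) := by
  set r : ℝ := (k : ℝ)⁻¹
  let T (i : ℕ) : Finset ℕ :=
    (Icc 1 N).filter fun n : ℕ ↦ x / (n : ℝ) ^ k ∈ Set.Icc ((i : ℝ) + 1 + δ) ((i : ℝ) + 2 - δ)
  have hsub (i : ℕ) : T i ⊆ Sk k N δ x := by
    intro n hn
    obtain ⟨hnN, h₁, h₂⟩ := mem_filter.mp hn
    refine mem_filter.mpr ⟨hnN, le_distNearestInt_of_mem_Icc (m := i + 1) ?_ ?_⟩ <;>
      push_cast <;> linarith
  have hdisj : (range M : Set ℕ).PairwiseDisjoint T := by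
    intro i _ j _ hij
    refine disjoint_filter.mpr fun n _ hi hj ↦ ?_
    rcases hij.lt_or_gt with h | h
    · have : (i : ℝ) + 1 ≤ j := mod_cast h
      linarith [hi.2, hj.1]
    · have : (j : ℝ) + 1 ≤ i := mod_cast h
      linarith [hi.1, hj.2]
  have hscale {p : ℝ} (hp : 0 < p) : (x / p) ^ r = x ^ r * p ^ (-r) := by
    rw [div_rpow hx.le hp.le, rpow_neg hp.le, div_eq_mul_inv]
  have hT (i : ℕ) :
      x ^ r * (((i : ℝ) + 1 + δ) ^ (-r) - ((i : ℝ) + 2 - δ) ^ (-r)) - 1 ≤ #(T i) := by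
    have := sub_sub_one_le_card_filter_div_pow_mem_Icc hk hx hxN
      (p := (i : ℝ) + 1 + δ) (q := (i : ℝ) + 2 - δ) (by linarith [i.cast_nonneg (α := ℝ)])
      (by linarith [i.cast_nonneg (α := ℝ)])
    rwa [hscale (by positivity), hscale (by linarith [i.cast_nonneg (α := ℝ)]), ← mul_sub] at this
  calc (1 - 2 * δ) * x ^ r * (2 ^ (-r) - ((M : ℝ) + 2) ^ (-r)) - M
      ≤ x ^ r * ∑ i ∈ range M, (((i : ℝ) + 1 + δ) ^ (-r) - ((i : ℝ) + 2 - δ) ^ (-r)) - M := by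
        rw [mul_comm _ (x ^ r), mul_assoc]
        gcongr
        exact mul_sub_rpow_le_sum_sub_rpow (neg_nonpos.mpr (by positivity)) hδ0.le hδ M
    _ = ∑ i ∈ range M, (x ^ r * (((i : ℝ) + 1 + δ) ^ (-r) - ((i : ℝ) + 2 - δ) ^ (-r)) - 1) := by
        rw [mul_sum, sum_sub_distrib (g := fun _ ↦ (1 : ℝ))]; simp
    _ ≤ ∑ i ∈ range M, (#(T i) : ℝ) := sum_le_sum fun i _ ↦ hT i
    _ = #((range M).biUnion T) := by rw [card_biUnion hdisj]; push_cast; rfl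
    _ ≤ #(Sk k N δ x) := Nat.cast_le.mpr (card_le_card (biUnion_subset.mpr fun i _ ↦ hsub i))

theorem statement15_general (a : ℝ) (δ : ℝ) (hδ0 : 0 < δ) (hδ : δ < 1 / 2) :
    ∃ k₀ : ℕ, ∀ k : ℕ, k₀ ≤ k → ∀ N : ℕ, Real.exp (a * k) < (N : ℝ) → ∀ x : ℝ,
      Real.exp (a * k ^ 2) ≤ x → x ≤ (N : ℝ) ^ k →
      ((Sk k N δ x).card : ℝ) ≥
        ((1 / 2 - δ) * ((2 : ℝ) ^ (-(1 : ℝ) / k) - (3 / 2) * Real.exp (-a))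
          - (2 / 3) ^ k) * x ^ ((1 : ℝ) / k) := by
  refine ⟨1, fun k hk N _ x hx hxN ↦ ?_⟩
  have hk0 : k ≠ 0 := by omega
  have hx0 : 0 < x := (exp_pos _).trans_le hx
  have hcount := le_card_Sk hk0 hδ0 hδ hx0 hxN
  simp only [neg_div, one_div, ge_iff_le]
  set r : ℝ := (k : ℝ)⁻¹
  set X := x ^ r
  set E := 2 / 3 * exp a
  set M := ⌊E ^ k⌋₊
  have hexp_le_X : exp (a * k) ≤ X := by
    rw [le_rpow_inv_iff_of_pos (exp_pos _).le hx0.le (by positivity), ← exp_mul]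
    convert hx using 2; ring
  have hM : (M : ℝ) ≤ (2 / 3) ^ k * X := calc
    (M : ℝ) ≤ E ^ k := Nat.floor_le (by positivity)
    _ = (2 / 3) ^ k * exp (a * k) := by rw [mul_pow, ← exp_nat_mul, mul_comm a]
    _ ≤ (2 / 3) ^ k * X := by gcongr
  have hM2 : ((M : ℝ) + 2) ^ (-r) ≤ 3 / 2 * exp (-a) := calc
    ((M : ℝ) + 2) ^ (-r) ≤ (E ^ k) ^ (-r) :=
      rpow_le_rpow_of_nonpos (by positivity) (by linarith [Nat.lt_floor_add_one (E ^ k)])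
        (neg_nonpos.mpr (by positivity))
    _ = E⁻¹ := by
      rw [← rpow_natCast, ← rpow_mul (by positivity), mul_neg, mul_inv_cancel₀ (by simpa),
        rpow_neg_one]
    _ = 3 / 2 * exp (-a) := by rw [exp_neg, mul_inv]; norm_num
  have h2 : ((M : ℝ) + 2) ^ (-r) ≤ 2 ^ (-r) :=
    rpow_le_rpow_of_nonpos two_pos (by linarith [M.cast_nonneg (α := ℝ)])
      (neg_nonpos.mpr (by positivity))
  specialize hcount M
  have hδX : 0 ≤ (2⁻¹ - δ) * X := mul_nonneg (by linarith) (by positivity)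
  calc ((2⁻¹ - δ) * (2 ^ (-r) - 3 / 2 * exp (-a)) - (2 / 3) ^ k) * X
      ≤ (2⁻¹ - δ) * X * (2 ^ (-r) - ((M : ℝ) + 2) ^ (-r)) - M := by
        nlinarith [mul_le_mul_of_nonneg_left hM2 hδX]
    _ ≤ (1 - 2 * δ) * X * (2 ^ (-r) - ((M : ℝ) + 2) ^ (-r)) - M := by
        nlinarith [mul_nonneg hδX (sub_nonneg.mpr h2)]
    _ ≤ #(Sk k N δ x) := hcount

theorem statement15 (a : ℝ) (ha : 0 < a) (δ : ℝ) (hδ0 : 0 < δ) (hδ : δ < 1 / 2) :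
    ∃ k₀ : ℕ, ∀ k : ℕ, k₀ ≤ k → ∀ N : ℕ, Real.exp (a * k) < (N : ℝ) → ∀ x : ℝ,
      Real.exp (a * k ^ 2) ≤ x → x ≤ (N : ℝ) ^ k →
      ((Sk k N δ x).card : ℝ) ≥
        ((1 / 2 - δ) * ((2 : ℝ) ^ (-(1 : ℝ) / k) - (3 / 2) * Real.exp (-a))
          - (2 / 3) ^ k) * x ^ ((1 : ℝ) / k) :=
  statement15_general a δ hδ0 hδ
end

section
/- For all positive integers n and k, one has 0 ≤ 1/n^k − 1/(n(n+1)⋯(n+k−1)) < k²/(2 n^{k+1}). -/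
/-!
Write `1 / ∏ j < k, (x + j) = q / x ^ k` with `q = ∏ j < k, (1 - j / (x + j))`, so that the
difference in question is `(1 - q) / x ^ k`. Each factor of `q` lies in `[0, 1]`, which gives
`1 - q ≥ 0`, and the Weierstrass product inequality
`1 - q ≤ ∑ j / (x + j) ≤ ∑ j / x = k (k - 1) / (2 x)` gives the upper bound, which is strict
against `k ^ 2 / (2 x)` as soon as `k > 0`.
-/

open Finset

theorem Finset.one_sub_sum_le_prod_one_sub {ι R : Type*} [CommRing R] [PartialOrder R]
    [IsOrderedRing R] {s : Finset ι} {f : ι → R} (h0 : ∀ i ∈ s, 0 ≤ f i)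
    (h1 : ∀ i ∈ s, f i ≤ 1) :
    1 - ∑ i ∈ s, f i ≤ ∏ i ∈ s, (1 - f i) := by
  classical
  induction s using Finset.induction_on with
  | empty => simp
  | insert a s ha ih =>
    rw [sum_insert ha, prod_insert ha]
    have ih' := ih (fun i hi => h0 i (mem_insert_of_mem hi)) fun i hi => h1 i (mem_insert_of_mem hi)
    have hsum : 0 ≤ ∑ i ∈ s, f i := sum_nonneg fun i hi => h0 i (mem_insert_of_mem hi)
    have ha0 : 0 ≤ f a := h0 a (mem_insert_self a s)
    have ha1 : 0 ≤ 1 - f a := sub_nonneg.2 (h1 a (mem_insert_self a s))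
    calc 1 - (f a + ∑ i ∈ s, f i)
        ≤ 1 - (f a + ∑ i ∈ s, f i) + f a * ∑ i ∈ s, f i :=
          le_add_of_nonneg_right (mul_nonneg ha0 hsum)
      _ = (1 - f a) * (1 - ∑ i ∈ s, f i) := by ring
      _ ≤ (1 - f a) * ∏ i ∈ s, (1 - f i) := mul_le_mul_of_nonneg_left ih' ha1

theorem Finset.sum_range_cast_id_mul_two {R : Type*} [CommRing R] (k : ℕ) :
    (∑ j ∈ range k, (j : R)) * 2 = k * (k - 1) := by
  induction k with
  | zero => simp
  | succ k ih =>
    rw [sum_range_succ, add_mul, ih]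
    push_cast
    ring

section RisingProduct

variable {x : ℝ} (hx : 0 < x) (k : ℕ)
include hx

lemma one_div_pow_sub_one_div_prod_add_eq :
    1 / x ^ k - 1 / ∏ j ∈ range k, (x + j) =
      (1 - ∏ j ∈ range k, (1 - j / (x + j))) / x ^ k := by
  have hfactor : ∀ j ∈ range k, 1 - (j : ℝ) / (x + j) = x / (x + j) := fun j _ => by
    field_simp
    ring
  rw [prod_congr rfl hfactor, prod_div_distrib, prod_const, card_range]
  have : 0 < ∏ j ∈ range k, (x + j) := prod_pos fun j _ => by positivity
  field_simp

lemma div_add_mem_Icc (j : ℕ) : (j : ℝ) / (x + j) ∈ Set.Icc 0 1 :=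
  ⟨by positivity, div_le_one_of_le₀ (by linarith) (by positivity)⟩

lemma one_div_pow_sub_one_div_prod_add_nonneg :
    0 ≤ 1 / x ^ k - 1 / ∏ j ∈ range k, (x + j) := by
  rw [one_div_pow_sub_one_div_prod_add_eq hx]
  have hq : ∏ j ∈ range k, (1 - (j : ℝ) / (x + j)) ≤ 1 :=
    prod_le_one (fun j _ => sub_nonneg.2 (div_add_mem_Icc hx j).2)
      fun j _ => sub_le_self _ (div_add_mem_Icc hx j).1
  exact div_nonneg (sub_nonneg.2 hq) (by positivity)

lemma sum_range_div_add_le : ∑ j ∈ range k, (j : ℝ) / (x + j) ≤ k * (k - 1) / (2 * x) := by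
  calc ∑ j ∈ range k, (j : ℝ) / (x + j)
      ≤ ∑ j ∈ range k, (j : ℝ) / x :=
        sum_le_sum fun j _ => by gcongr; linarith [j.cast_nonneg (α := ℝ)]
    _ = k * (k - 1) / (2 * x) := by
      rw [← sum_div, ← sum_range_cast_id_mul_two]
      ring

lemma one_div_pow_sub_one_div_prod_add_le :
    1 / x ^ k - 1 / ∏ j ∈ range k, (x + j) ≤ k * (k - 1) / (2 * x ^ (k + 1)) := by
  have hweierstrass :=
    one_sub_sum_le_prod_one_sub (s := range k) (f := fun j => (j : ℝ) / (x + j))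
      (fun j _ => (div_add_mem_Icc hx j).1) fun j _ => (div_add_mem_Icc hx j).2
  rw [one_div_pow_sub_one_div_prod_add_eq hx]
  calc (1 - ∏ j ∈ range k, (1 - (j : ℝ) / (x + j))) / x ^ k
      ≤ (∑ j ∈ range k, (j : ℝ) / (x + j)) / x ^ k := by gcongr; linarith
    _ ≤ k * (k - 1) / (2 * x) / x ^ k := by gcongr; exact sum_range_div_add_le hx k
    _ = k * (k - 1) / (2 * x ^ (k + 1)) := by rw [div_div, pow_succ]; ring

end RisingProduct

theorem statement17 (n k : ℕ) (hn : 0 < n) (hk : 0 < k) :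
    0 ≤ 1 / (n : ℝ) ^ k - 1 / ∏ j ∈ Finset.range k, ((n : ℝ) + j) ∧
    1 / (n : ℝ) ^ k - 1 / ∏ j ∈ Finset.range k, ((n : ℝ) + j)
      < (k : ℝ) ^ 2 / (2 * (n : ℝ) ^ (k + 1)) := by
  have hx : (0 : ℝ) < n := by exact_mod_cast hn
  have hk' : (1 : ℝ) ≤ k := by exact_mod_cast hk
  refine ⟨one_div_pow_sub_one_div_prod_add_nonneg hx k,
    (one_div_pow_sub_one_div_prod_add_le hx k).trans_lt ?_⟩
  gcongr
  linarith
end
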